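/- arXiv:2605.03833 — 6 statements merged into one kernel-verified Lean document; each statement's English description precedes it below -/
import Mathlib

section
/- For every real number a and every real number s with s > 2|a|, the function t ↦ e^{−st}·(sinh(at))²/t is integrable on (0, ∞) and ∫₀^∞ e^{−st}·(sinh(at))²/t dt = (1/4)·log(1/(1 − (2a/s)²)). -/
/-!
Since `4 e^{-st} sinh²(at) = (e^{-(s-2a)t} - e^{-st}) + (e^{-(s+2a)t} - e^{-st})`, the integral
splits into two Frullani integrals for `f x = e^{-x}`, worth `log (s / (s - 2a))` and
`log (s / (s + 2a))`; their sum is `log (1 / (1 - (2a/s)²))`. Each Frullani integrand is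
integrable since `0 ≤ (e^{-pt} - e^{-qt}) / t ≤ (q - p) e^{-pt}` for `p ≤ q`.
-/

open MeasureTheory Real Set

theorem integrableOn_inv_mul_exp_neg_sub_exp_neg {p q : ℝ} (hp : 0 < p) (hq : 0 < q) :
    IntegrableOn (fun t => t⁻¹ * (exp (-(p * t)) - exp (-(q * t)))) (Ioi 0) := by
  wlog hpq : p ≤ q generalizing p q
  · exact (this hq hp (le_of_not_ge hpq)).neg.congr_fun
      (fun t _ => by simp only [Pi.neg_apply]; ring) measurableSet_Ioi
  refine Integrable.mono' ((exp_neg_integrableOn_Ioi 0 hp).const_mul (q - p)) (by fun_prop) ?_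
  filter_upwards [ae_restrict_mem measurableSet_Ioi] with t (ht : 0 < t)
  have hsplit : exp (-(q * t)) = exp (-(p * t)) * exp (-((q - p) * t)) := by
    rw [← exp_add]; ring_nf
  have htangent : 1 - (q - p) * t ≤ exp (-((q - p) * t)) := by
    linarith [add_one_le_exp (-((q - p) * t))]
  have hmono : exp (-(q * t)) ≤ exp (-(p * t)) := exp_le_exp.2 (by nlinarith)
  rw [norm_mul, norm_inv, norm_of_nonneg ht.le, norm_of_nonneg (sub_nonneg.2 hmono),
    inv_mul_le_iff₀ ht, hsplit, neg_mul]
  nlinarith [exp_pos (-(p * t))]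

theorem integral_inv_mul_exp_neg_sub_exp_neg {p q : ℝ} (hp : 0 < p) (hq : 0 < q) :
    ∫ t in Ioi 0, t⁻¹ * (exp (-(p * t)) - exp (-(q * t))) = log (q / p) := by
  have hcont : Continuous fun x : ℝ => exp (-x) := by fun_prop
  have hzero : Filter.Tendsto (fun x : ℝ => exp (-x)) (nhdsWithin 0 (Ioi 0)) (nhds 1) := by
    simpa using (hcont.tendsto 0).mono_left nhdsWithin_le_nhds
  simpa using Frullani.integral_Ioi_eq (hcont.locallyIntegrable.locallyIntegrableOn _)
    hp hq hzero tendsto_exp_neg_atTop_nhds_zero (integrableOn_inv_mul_exp_neg_sub_exp_neg hp hq)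

theorem exp_neg_mul_mul_sinh_sq (s a t : ℝ) :
    exp (-s * t) * sinh (a * t) ^ 2 = (1 / 4) *
      ((exp (-((s - 2 * a) * t)) - exp (-(s * t))) +
        (exp (-((s + 2 * a) * t)) - exp (-(s * t)))) := by
  have hminus : exp (-((s - 2 * a) * t)) = exp (-(s * t)) * exp (a * t) ^ 2 := by
    rw [sq, ← exp_add, ← exp_add]; ring_nf
  have hplus : exp (-((s + 2 * a) * t)) = exp (-(s * t)) * exp (-(a * t)) ^ 2 := by
    rw [sq, ← exp_add, ← exp_add]; ring_nf
  have hinv : exp (a * t) * exp (-(a * t)) = 1 := by rw [← exp_add, add_neg_cancel, exp_zero]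
  rw [neg_mul, sinh_eq, hminus, hplus]
  linear_combination (-(1 / 2) * exp (-(s * t))) * hinv

/-- For every real `a` and every real `s > 2|a|`, the function
`t ↦ exp(-s t) · (sinh(a t))² / t` is integrable on `(0, ∞)` and
`∫₀^∞ exp(-s t) · (sinh(a t))² / t dt = (1/4) · log(1/(1 − (2a/s)²))`. -/
theorem laplace_sinh_sq_div_t (a s : ℝ) (hs : s > 2 * |a|) :
    IntegrableOn (fun t : ℝ => Real.exp (-s * t) * (Real.sinh (a * t)) ^ 2 / t)
      (Set.Ioi (0 : ℝ)) volume ∧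
    ∫ t in Set.Ioi (0 : ℝ), Real.exp (-s * t) * (Real.sinh (a * t)) ^ 2 / t
      = (1 / 4) * Real.log (1 / (1 - (2 * a / s) ^ 2)) := by
  have hminus : 0 < s - 2 * a := by linarith [le_abs_self a]
  have hplus : 0 < s + 2 * a := by linarith [neg_abs_le a]
  have hs0 : 0 < s := by linarith [abs_nonneg a]
  have hint₁ := integrableOn_inv_mul_exp_neg_sub_exp_neg hminus hs0
  have hint₂ := integrableOn_inv_mul_exp_neg_sub_exp_neg hplus hs0
  have hsplit : (fun t : ℝ => exp (-s * t) * sinh (a * t) ^ 2 / t) = fun t => (1 / 4) *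
      (t⁻¹ * (exp (-((s - 2 * a) * t)) - exp (-(s * t))) +
        t⁻¹ * (exp (-((s + 2 * a) * t)) - exp (-(s * t)))) := by
    ext t; rw [exp_neg_mul_mul_sinh_sq]; ring
  have hlog : log (s / (s - 2 * a)) + log (s / (s + 2 * a)) =
      log (1 / (1 - (2 * a / s) ^ 2)) := by
    have hfactor : 1 - (2 * a / s) ^ 2 = (s - 2 * a) * (s + 2 * a) / s ^ 2 := by
      field_simp; ring
    rw [← log_mul (by positivity) (by positivity), hfactor, one_div_div]
    field_simp
  rw [hsplit]
  refine ⟨(hint₁.add hint₂).const_mul _, ?_⟩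
  rw [integral_const_mul, integral_add hint₁ hint₂,
    integral_inv_mul_exp_neg_sub_exp_neg hminus hs0,
    integral_inv_mul_exp_neg_sub_exp_neg hplus hs0, hlog]
end

section
/- There exists a real number L > 0 such that (1 − 2z/ι_0)^{μ_0}·φ(z) → L as z → ι_0/2 along real z < ι_0/2 (φ has no real poles in some interval (ι_0/2 − δ, ι_0/2), so this makes sense). Equivalently, φ has a pole of order exactly μ_0 at z = ι_0/2 and the coefficient of (1 − 2z/ι_0)^{−μ_0} in its Laurent expansion there is strictly positive. -/
/-!
Near `z = ι₀/2` the only factors of `φ` that blow up are those with `ιᵢ = ι₀` and `⟨ε, cᵢ⟩ = 2`,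
and a sign vector produces all `μ₀` of them exactly when it is `+1` on the set `S` of columns
met by the minimal rows. Hence the limit is `ι₀^{-μ₀}` times a signed sum
`F = ∑_{ε = +1 on S} sgn ε ∏ᵣ (aᵣ - ⟨ε, bᵣ⟩)⁻¹` over the remaining rows, with `bᵣ ≥ 0`,
`∑ bᵣ < aᵣ` and every free column met by some row. Such sums are positive, by induction on the
number of free columns: freeing a column `j` turns `F` into `F(a) - F(a + 2 b_{·j})`, and raising
one `aᵣ` by `d ≥ 0` lowers `F` by `d` times the same kind of sum with that row duplicated.
-/

open Real Set Filter

/-- `±1` sign attached to a boolean. -/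
noncomputable def sg (b : Bool) : ℝ := if b then 1 else -1

open Finset

section SignedSum

variable {β : Type*} [Fintype β]

lemma sg_le_one (b : Bool) : sg b ≤ 1 := by
  cases b <;> norm_num [sg]

noncomputable def signDot (ε : β → Bool) (b : β → ℝ) : ℝ := ∑ j, sg (ε j) * b j

lemma signDot_le_sum {b : β → ℝ} (hb : ∀ j, 0 ≤ b j) (ε : β → Bool) :
    signDot ε b ≤ ∑ j, b j :=
  sum_le_sum fun j _ => by simpa using mul_le_mul_of_nonneg_right (sg_le_one (ε j)) (hb j)

lemma signDot_eq_sum_iff {b : β → ℝ} (hb : ∀ j, 0 ≤ b j) (ε : β → Bool) :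
    signDot ε b = ∑ j, b j ↔ ∀ j, 0 < b j → ε j = true := by
  have hdiff : ∑ j, b j - signDot ε b = ∑ j, (1 - sg (ε j)) * b j := by
    simp only [signDot, ← sum_sub_distrib, sub_mul, one_mul]
  rw [eq_comm, ← sub_eq_zero, hdiff, sum_eq_zero_iff_of_nonneg]
  · refine forall_congr' fun j => ?_
    cases ε j <;> norm_num [sg, (hb j).lt_iff_ne', eq_comm]
  · intro j _
    exact mul_nonneg (by linarith [sg_le_one (ε j)]) (hb j)

def shiftRow (j : β) (r : ℝ × (β → ℝ)) : ℝ × (β → ℝ) := (r.1 + 2 * r.2 j, r.2)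

def IsAdmissible (r : ℝ × (β → ℝ)) : Prop := (∀ j, 0 ≤ r.2 j) ∧ ∑ j, r.2 j < r.1

lemma IsAdmissible.sub_signDot_pos {r : ℝ × (β → ℝ)} (hr : IsAdmissible r) (ε : β → Bool) :
    0 < r.1 - signDot ε r.2 := by
  linarith [signDot_le_sum hr.1 ε, hr.2]

lemma IsAdmissible.shiftRow {r : ℝ × (β → ℝ)} (hr : IsAdmissible r) (j : β) :
    IsAdmissible (shiftRow j r) :=
  ⟨hr.1, by simp only [_root_.shiftRow]; linarith [hr.1 j, hr.2]⟩

variable [DecidableEq β]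

lemma signDot_update_false {ε : β → Bool} {j : β} (hj : ε j = true) (b : β → ℝ) :
    signDot (Function.update ε j false) b = signDot ε b - 2 * b j := by
  have : signDot ε b - signDot (Function.update ε j false) b = 2 * b j := by
    rw [signDot, signDot, ← sum_sub_distrib, sum_eq_single j]
    · norm_num [hj, sg]
      ring
    · intro k _ hk
      simp [hk]
    · simp
  linarith

lemma prod_sg_update_false {ε : β → Bool} {j : β} (hj : ε j = true) :
    ∏ k, sg (Function.update ε j false k) = -∏ k, sg (ε k) := by
  simp only [Function.apply_update (fun _ => sg), prod_update_of_mem (Finset.mem_univ j),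
    ← mul_prod_erase univ (fun k => sg (ε k)) (Finset.mem_univ j), hj, sdiff_singleton_eq_erase]
  norm_num [sg]

/-- With `T = ∅` and rows `(ιᵢ, z cᵢ)` this is the paper's `φ(z)`. -/
noncomputable def signedSum (T : Finset β) (R : Multiset (ℝ × (β → ℝ))) : ℝ :=
  ∑ ε with ∀ j ∈ T, ε j = true, (∏ j, sg (ε j)) * (R.map fun r => (r.1 - signDot ε r.2)⁻¹).prod

lemma signedSum_univ_pos {R : Multiset (ℝ × (β → ℝ))} (hR : ∀ r ∈ R, IsAdmissible r) :
    0 < signedSum univ R := by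
  have hsingle :
      (univ.filter fun ε : β → Bool => ∀ j ∈ (univ : Finset β), ε j = true) = {fun _ => true} := by
    ext ε
    simp [funext_iff]
  rw [signedSum, hsingle, sum_singleton]
  simp only [sg, if_true, prod_const_one, one_mul]
  exact Multiset.prod_pos fun x hx => by
    obtain ⟨r, hr, rfl⟩ := Multiset.mem_map.1 hx
    exact inv_pos.2 ((hR r hr).sub_signDot_pos _)

lemma signedSum_cons_sub_shiftRow (T : Finset β) (P : Multiset (ℝ × (β → ℝ)))
    {r : ℝ × (β → ℝ)} (hr : IsAdmissible r) (j : β) :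
    signedSum T (r ::ₘ P) - signedSum T (shiftRow j r ::ₘ P)
      = 2 * r.2 j * signedSum T (r ::ₘ shiftRow j r ::ₘ P) := by
  simp only [signedSum, ← sum_sub_distrib, mul_sum, Multiset.map_cons, Multiset.prod_cons]
  refine sum_congr rfl fun ε _ => ?_
  have h₁ := hr.sub_signDot_pos ε
  have h₂ := (hr.shiftRow j).sub_signDot_pos ε
  simp only [shiftRow] at h₂ ⊢
  field_simp
  ring

lemma signedSum_erase {T : Finset β} {j : β} (hj : j ∈ T) (R : Multiset (ℝ × (β → ℝ))) :
    signedSum (T.erase j) R = signedSum T R - signedSum T (R.map (shiftRow j)) := by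
  unfold signedSum
  rw [← sum_filter_add_sum_filter_not _ (fun ε => ε j = true), sub_eq_add_neg, ← sum_neg_distrib]
  congr 1
  · congr 1
    ext ε
    simp only [mem_filter, Finset.mem_univ, true_and, mem_erase]
    exact ⟨fun h k hk => if hkj : k = j then hkj ▸ h.2 else h.1 k ⟨hkj, hk⟩,
      fun h => ⟨fun k hk => h k hk.2, h j hj⟩⟩
  · refine (sum_nbij' (Function.update · j false) (Function.update · j true) ?_ ?_ ?_ ?_ ?_).symm
    · intro ε hε
      simp only [mem_filter, Finset.mem_univ, true_and, mem_erase] at hε ⊢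
      refine ⟨fun k hk => ?_, by simp⟩
      rw [Function.update_of_ne hk.1, hε k hk.2]
    · intro ε hε
      simp only [mem_filter, Finset.mem_univ, true_and, mem_erase] at hε ⊢
      intro k hk
      by_cases hkj : k = j
      · simp [hkj]
      · rw [Function.update_of_ne hkj, hε.1 k ⟨hkj, hk⟩]
    · intro ε hε
      simp only [mem_filter] at hε
      simpa [Function.update_eq_self_iff] using (hε.2 j hj).symm
    · intro ε hε
      simp only [mem_filter, Bool.not_eq_true] at hε
      simpa [Function.update_eq_self_iff] using hε.2.symm
    · intro ε hε
      have hεj : ε j = true := (mem_filter.1 hε).2 j hj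
      simp only [prod_sg_update_false hεj, signDot_update_false hεj, Multiset.map_map,
        Function.comp_def, shiftRow, neg_mul]
      congr 4 with r
      ring

lemma signedSum_add_map_shiftRow_le {T : Finset β}
    (hnonneg : ∀ R, (∀ r ∈ R, IsAdmissible r) → 0 ≤ signedSum T R) (j : β)
    (R : Multiset (ℝ × (β → ℝ))) :
    ∀ P, (∀ r ∈ P + R, IsAdmissible r) →
      signedSum T (P + R.map (shiftRow j)) ≤ signedSum T (P + R) := by
  induction R using Multiset.induction_on with
  | empty => simp
  | cons r R ih =>
    intro P hadm
    simp only [Multiset.mem_add, Multiset.mem_cons] at hadm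
    have hr : IsAdmissible r := hadm r (Or.inr (Or.inl rfl))
    have hstep := signedSum_cons_sub_shiftRow T (P + R) hr j
    calc signedSum T (P + (r ::ₘ R).map (shiftRow j))
        = signedSum T ((shiftRow j r ::ₘ P) + R.map (shiftRow j)) := by simp
      _ ≤ signedSum T ((shiftRow j r ::ₘ P) + R) := by
        refine ih _ fun x hx => ?_
        simp only [Multiset.mem_add, Multiset.mem_cons] at hx
        rcases hx with (rfl | hx) | hx
        · exact hr.shiftRow j
        · exact hadm x (Or.inl hx)
        · exact hadm x (Or.inr (Or.inr hx))
      _ ≤ signedSum T (P + r ::ₘ R) := by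
        have hdup : 0 ≤ signedSum T (r ::ₘ shiftRow j r ::ₘ (P + R)) := by
          refine hnonneg _ fun x hx => ?_
          simp only [Multiset.mem_cons, Multiset.mem_add] at hx
          rcases hx with rfl | rfl | hx | hx
          · exact hr
          · exact hr.shiftRow j
          · exact hadm x (Or.inl hx)
          · exact hadm x (Or.inr (Or.inr hx))
        rw [Multiset.cons_add, Multiset.add_cons]
        linarith [mul_nonneg (mul_nonneg zero_le_two (hr.1 j)) hdup]

lemma signedSum_map_shiftRow_lt {T : Finset β}
    (hnonneg : ∀ R, (∀ r ∈ R, IsAdmissible r) → 0 ≤ signedSum T R)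
    (hpos : ∀ R, (∀ r ∈ R, IsAdmissible r) → (∀ k ∉ T, ∃ r ∈ R, 0 < r.2 k) →
      0 < signedSum T R)
    {j : β} {R : Multiset (ℝ × (β → ℝ))} (hadm : ∀ r ∈ R, IsAdmissible r)
    (hcov : ∀ k ∉ T, ∃ r ∈ R, 0 < r.2 k) (hj : ∃ r ∈ R, 0 < r.2 j) :
    signedSum T (R.map (shiftRow j)) < signedSum T R := by
  obtain ⟨r, hr, hrj⟩ := hj
  obtain ⟨R, rfl⟩ := Multiset.exists_cons_of_mem hr
  have hadm' : ∀ x ∈ r ::ₘ shiftRow j r ::ₘ R, IsAdmissible x := by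
    intro x hx
    rcases Multiset.mem_cons.1 hx with rfl | hx
    · exact hadm x (Multiset.mem_cons_self _ _)
    rcases Multiset.mem_cons.1 hx with rfl | hx
    · exact (hadm r hr).shiftRow j
    · exact hadm x (Multiset.mem_cons_of_mem hx)
  have hdup : 0 < signedSum T (r ::ₘ shiftRow j r ::ₘ R) := by
    refine hpos _ hadm' fun k hk => ?_
    obtain ⟨x, hx, hxk⟩ := hcov k hk
    refine ⟨x, ?_, hxk⟩
    rcases Multiset.mem_cons.1 hx with rfl | hx
    · exact Multiset.mem_cons_self _ _
    · exact Multiset.mem_cons_of_mem (Multiset.mem_cons_of_mem hx)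
  have hstep := signedSum_cons_sub_shiftRow T R (hadm r hr) j
  calc signedSum T ((r ::ₘ R).map (shiftRow j))
        = signedSum T ({shiftRow j r} + R.map (shiftRow j)) := by simp
    _ ≤ signedSum T ({shiftRow j r} + R) := by
        refine signedSum_add_map_shiftRow_le hnonneg j R _ fun x hx => ?_
        rcases Multiset.mem_add.1 hx with hx | hx
        · rw [Multiset.mem_singleton.1 hx]
          exact (hadm r hr).shiftRow j
        · exact hadm x (Multiset.mem_cons_of_mem hx)
    _ < signedSum T (r ::ₘ R) := by
        rw [Multiset.singleton_add]
        linarith [mul_pos (mul_pos two_pos hrj) hdup]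

theorem signedSum_nonneg (T : Finset β) {R : Multiset (ℝ × (β → ℝ))}
    (hadm : ∀ r ∈ R, IsAdmissible r) : 0 ≤ signedSum T R := by
  suffices h : ∀ U : Finset β, ∀ R, (∀ r ∈ R, IsAdmissible r) → 0 ≤ signedSum Uᶜ R by
    simpa using h Tᶜ R hadm
  intro U
  induction U using Finset.induction_on with
  | empty => exact fun R hR => by simpa using (signedSum_univ_pos hR).le
  | insert j U hj ih =>
    intro R hR
    rw [compl_insert, signedSum_erase (mem_compl.2 hj), sub_nonneg]
    simpa using signedSum_add_map_shiftRow_le ih j R 0 (by simpa using hR)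

theorem signedSum_pos {T : Finset β} {R : Multiset (ℝ × (β → ℝ))}
    (hadm : ∀ r ∈ R, IsAdmissible r) (hcov : ∀ k ∉ T, ∃ r ∈ R, 0 < r.2 k) :
    0 < signedSum T R := by
  suffices h : ∀ U : Finset β, ∀ R, (∀ r ∈ R, IsAdmissible r) →
      (∀ k ∉ Uᶜ, ∃ r ∈ R, 0 < r.2 k) → 0 < signedSum Uᶜ R by
    simpa using h Tᶜ R hadm (by simpa using hcov)
  intro U
  induction U using Finset.induction_on with
  | empty => exact fun R hR _ => by simpa using signedSum_univ_pos hR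
  | insert j U hj ih =>
    intro R hR hcov
    rw [compl_insert, signedSum_erase (mem_compl.2 hj), sub_pos]
    refine signedSum_map_shiftRow_lt (fun R' => signedSum_nonneg _) ih hR
      (fun k hk => hcov k (by simp_all)) (hcov j (by simp))

end SignedSum

open Topology

lemma pow_card_filter_mul_prod {α M : Type*} [CommMonoid M] (s : Finset α) (p : α → Prop)
    [DecidablePred p] (x : M) (f : α → M) :
    x ^ #(s.filter p) * ∏ i ∈ s, f i = ∏ i ∈ s, if p i then x * f i else f i := by
  rw [prod_ite, prod_mul_distrib, prod_const, ← prod_filter_mul_prod_filter_not s p f, mul_assoc]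

lemma tendsto_sub_mul_inv {a w z₀ : ℝ} (h : a - w * z₀ ≠ 0) :
    Tendsto (fun z => (a - w * z)⁻¹) (𝓝[<] z₀) (𝓝 (a - w * z₀)⁻¹) := by
  have hcont : ContinuousAt (fun z => (a - w * z)⁻¹) z₀ := by fun_prop (disch := exact h)
  exact hcont.tendsto.mono_left nhdsWithin_le_nhds

lemma tendsto_one_sub_div_mul_inv {a w : ℝ} (ha : 0 < a) (hw : w ≤ 2) :
    Tendsto (fun z => (1 - 2 * z / a) * (a - w * z)⁻¹) (𝓝[<] (a / 2))
      (𝓝 (if w = 2 then a⁻¹ else 0)) := by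
  split_ifs with h
  · subst h
    refine tendsto_const_nhds.congr' ?_
    filter_upwards [self_mem_nhdsWithin] with z (hz : z < a / 2)
    have : a - 2 * z ≠ 0 := by linarith
    field_simp
  · have hne : a - w * (a / 2) ≠ 0 := by nlinarith [lt_of_le_of_ne hw h]
    have hcont : ContinuousAt (fun z => (1 - 2 * z / a) * (a - w * z)⁻¹) (a / 2) := by
      fun_prop (disch := assumption)
    convert hcont.tendsto.mono_left nhdsWithin_le_nhds using 2
    field_simp
    ring

section PrincipalPart

variable {n r : ℕ} (ι : Fin r → ℕ) (c : Fin r → Fin n → ℕ) (ι0 : ℕ)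

noncomputable def limitFactor (ε : Fin n → Bool) (i : Fin r) : ℝ :=
  if ι i = ι0 then (if signDot ε (fun j => (c i j : ℝ)) = 2 then (ι0 : ℝ)⁻¹ else 0)
  else ((ι i : ℝ) - signDot ε (fun j => (c i j : ℝ)) * (ι0 / 2))⁻¹

variable {ι c ι0}

lemma tendsto_limitFactor (hpos : 0 < ι0) (hmin : ∀ i, ι0 ≤ ι i) (hrow : ∀ i, ∑ j, c i j = 2)
    (ε : Fin n → Bool) (i : Fin r) :
    Tendsto (fun z : ℝ => if ι i = ι0
        then (1 - 2 * z / ι0) * ((ι i : ℝ) - signDot ε (fun j => (c i j : ℝ)) * z)⁻¹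
        else ((ι i : ℝ) - signDot ε (fun j => (c i j : ℝ)) * z)⁻¹)
      (𝓝[<] ((ι0 : ℝ) / 2)) (𝓝 (limitFactor ι c ι0 ε i)) := by
  have hw : signDot ε (fun j => (c i j : ℝ)) ≤ 2 := by
    have := signDot_le_sum (fun j => Nat.cast_nonneg (c i j)) ε
    rwa [← Nat.cast_sum, hrow i, Nat.cast_two] at this
  have hpos' : (0 : ℝ) < ι0 := by exact_mod_cast hpos
  unfold limitFactor
  by_cases hi : ι i = ι0
  · simp only [hi, if_true]
    exact tendsto_one_sub_div_mul_inv hpos' hw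
  · have hlt : (ι0 : ℝ) < ι i := by exact_mod_cast lt_of_le_of_ne (hmin i) (Ne.symm hi)
    simp only [hi, if_false]
    exact tendsto_sub_mul_inv (by nlinarith)

lemma sum_prod_limitFactor_eq (hrow : ∀ i, ∑ j, c i j = 2) :
    ∑ ε, (∏ j, sg (ε j)) * ∏ i, limitFactor ι c ι0 ε i
      = (ι0 : ℝ)⁻¹ ^ #{i | ι i = ι0} * signedSum {j | ∃ i, ι i = ι0 ∧ 0 < c i j}
          (({i | ι i ≠ ι0} : Finset (Fin r)).val.map
            fun i => ((ι i : ℝ), fun j => (c i j : ℝ) * (ι0 / 2))) := by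
  have hrowℝ : ∀ i, ∑ j, (c i j : ℝ) = 2 := fun i => by exact_mod_cast hrow i
  have hgood : ∀ ε : Fin n → Bool,
      (∀ i ∈ ({i | ι i = ι0} : Finset (Fin r)), signDot ε (fun j => (c i j : ℝ)) = 2) ↔
        ∀ j ∈ ({j | ∃ i, ι i = ι0 ∧ 0 < c i j} : Finset (Fin n)), ε j = true := by
    intro ε
    have hrow_eq : ∀ i, signDot ε (fun j => (c i j : ℝ)) = 2 ↔ ∀ j, 0 < c i j → ε j = true := by
      intro i
      simp only [← hrowℝ i, signDot_eq_sum_iff (fun j => Nat.cast_nonneg _), Nat.cast_pos]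
    simp only [hrow_eq, mem_filter, Finset.mem_univ, true_and]
    exact ⟨fun h j ⟨i, hi, hij⟩ => h i hi j hij, fun h i hi j hij => h j ⟨i, hi, hij⟩⟩
  unfold limitFactor signedSum
  rw [mul_sum, sum_filter]
  refine sum_congr rfl fun ε _ => ?_
  rw [prod_ite, prod_ite_zero, prod_const]
  by_cases hε : ∀ j ∈ ({j | ∃ i, ι i = ι0 ∧ 0 < c i j} : Finset (Fin n)), ε j = true
  · rw [if_pos ((hgood ε).2 hε), if_pos hε, Multiset.map_map, Function.comp_def, prod_map_val]
    simp only [signDot, ← mul_assoc, ← sum_mul]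
    ring
  · rw [if_neg (mt (hgood ε).1 hε), if_neg hε]
    ring

lemma sum_prod_limitFactor_pos (hpos : 0 < ι0) (hmin : ∀ i, ι0 ≤ ι i)
    (hrow : ∀ i, ∑ j, c i j = 2) (hcol : ∀ j, 0 < ∑ i, c i j) :
    0 < ∑ ε, (∏ j, sg (ε j)) * ∏ i, limitFactor ι c ι0 ε i := by
  have hpos' : (0 : ℝ) < ι0 := by exact_mod_cast hpos
  rw [sum_prod_limitFactor_eq hrow]
  refine mul_pos (pow_pos (inv_pos.2 hpos') _) (signedSum_pos ?_ ?_)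
  · simp only [Multiset.mem_map, mem_val, mem_filter, Finset.mem_univ, true_and]
    rintro _ ⟨i, hi, rfl⟩
    have hlt : (ι0 : ℝ) < ι i := by exact_mod_cast lt_of_le_of_ne (hmin i) (Ne.symm hi)
    refine ⟨fun j => by positivity, ?_⟩
    rw [← sum_mul, ← Nat.cast_sum, hrow i]
    linarith
  · intro k hk
    obtain ⟨i, -, hik⟩ := Finset.sum_pos_iff.1 (hcol k)
    have hi : ι i ≠ ι0 := fun hi => hk (mem_filter.2 ⟨Finset.mem_univ k, i, hi, hik⟩)
    refine ⟨_, Multiset.mem_map_of_mem _ (mem_filter.2 ⟨Finset.mem_univ i, hi⟩), ?_⟩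
    have : (0 : ℝ) < c i k := by exact_mod_cast hik
    dsimp only
    positivity

end PrincipalPart

theorem principal_singularity_survives_general
    (n r : ℕ)
    (ι : Fin r → ℕ) (hι : ∀ i, 1 ≤ ι i)
    (c : Fin r → Fin n → ℕ)
    (hrow : ∀ i, ∑ j, c i j = 2)
    (hcol : ∀ j, 0 < ∑ i, c i j)
    (ι0 : ℕ) (hι0 : IsLeast (Set.range ι) ι0)
    (μ0 : ℕ) (hμ0 : μ0 = (Finset.univ.filter fun i => ι i = ι0).card)
    (φ : ℝ → ℝ)
    (hφ : φ = fun z : ℝ =>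
      ∑ ε : Fin n → Bool,
        (∏ j, sg (ε j)) *
          ∏ i, ((ι i : ℝ) - (∑ j, sg (ε j) * (c i j : ℝ)) * z)⁻¹) :
    ∃ L : ℝ, 0 < L ∧
      Tendsto (fun z : ℝ => (1 - 2 * z / (ι0 : ℝ)) ^ μ0 * φ z)
        (nhdsWithin ((ι0 : ℝ) / 2) (Set.Iio ((ι0 : ℝ) / 2))) (nhds L) := by
  have hpos : 0 < ι0 := by
    obtain ⟨⟨i, rfl⟩, -⟩ := hι0
    exact hι i
  have hmin : ∀ i, ι0 ≤ ι i := fun i => hι0.2 ⟨i, rfl⟩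
  refine ⟨_, sum_prod_limitFactor_pos hpos hmin hrow hcol, ?_⟩
  have hrescale : ∀ z : ℝ, (1 - 2 * z / (ι0 : ℝ)) ^ μ0 * φ z
      = ∑ ε : Fin n → Bool, (∏ j, sg (ε j)) * ∏ i, if ι i = ι0
          then (1 - 2 * z / ι0) * ((ι i : ℝ) - signDot ε (fun j => (c i j : ℝ)) * z)⁻¹
          else ((ι i : ℝ) - signDot ε (fun j => (c i j : ℝ)) * z)⁻¹ := by
    intro z
    rw [hφ, hμ0, mul_sum]
    exact sum_congr rfl fun ε _ => by rw [mul_left_comm, pow_card_filter_mul_prod]; rfl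
  simp only [hrescale]
  exact tendsto_finsetSum _ fun ε _ => tendsto_const_nhds.mul
    (tendsto_finsetProd _ fun i _ => tendsto_limitFactor hpos hmin hrow ε i)

/-- The paper's Lemma lem:Linxiao: the rational function
`φ(z) = ∑_{ε ∈ {−1,1}^n} (ε₁⋯εₙ)·∏ᵢ (ιᵢ − ⟨ε,cᵢ⟩z)⁻¹` has a pole of order exactly `μ₀`
at `z = ι₀/2` with strictly positive leading Laurent coefficient: there is `L > 0` with
`(1 − 2z/ι₀)^{μ₀}·φ(z) → L` as `z → ι₀/2` along real `z < ι₀/2`. -/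
theorem principal_singularity_survives
    (n r : ℕ) (hn : 1 ≤ n) (hr : 1 ≤ r)
    (ι : Fin r → ℕ) (hι : ∀ i, 1 ≤ ι i)
    (c : Fin r → Fin n → ℕ)
    (hc2 : ∀ i j, c i j ≤ 2)
    (hrow : ∀ i, ∑ j, c i j = 2)
    (hcol : ∀ j, 0 < ∑ i, c i j)
    (ι0 : ℕ) (hι0 : IsLeast (Set.range ι) ι0)
    (μ0 : ℕ) (hμ0 : μ0 = (Finset.univ.filter fun i => ι i = ι0).card)
    (φ : ℝ → ℝ)
    (hφ : φ = fun z : ℝ =>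
      ∑ ε : Fin n → Bool,
        (∏ j, sg (ε j)) *
          ∏ i, ((ι i : ℝ) - (∑ j, sg (ε j) * (c i j : ℝ)) * z)⁻¹) :
    ∃ L : ℝ, 0 < L ∧
      Tendsto (fun z : ℝ => (1 - 2 * z / (ι0 : ℝ)) ^ μ0 * φ z)
        (nhdsWithin ((ι0 : ℝ) / 2) (Set.Iio ((ι0 : ℝ) / 2))) (nhds L) :=
  principal_singularity_survives_general n r ι hι c hrow hcol ι0 hι0 μ0 hμ0 φ hφ
end

section
/- The rational function ψ(w) = w^{μ_0}·φ(ι_0(1 − w)/2) has no pole at w = 0, and there is a constant C depending only on n, r and ι_0 (one may take C = 2^n·binom(2r−2, r−1)·(ι_0·(ι_0+1)²)^r) such that |ψ^{(j)}(0)/j!| ≤ C·∏_{i=1}^r ι_i^{−1} for every 0 ≤ j ≤ μ_0 − 1. Equivalently, every Laurent coefficient of φ at z = ι_0/2 of negative order −m with 1 ≤ m ≤ μ_0 is bounded in absolute value by C·∏_{i=1}^r ι_i^{−1}; by the parity φ(−z) = (−1)^n·φ(z), the same bounds hold for the Laurent coefficients at z = −ι_0/2. -/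
/-!
Substitute `z = ι₀ (1 - w) / 2`. The factor `ι_i - ⟨ε, c_i⟩ z` becomes `b_i w + a_i` (`slope` and
`offset` below) with `2 a_i = 2 ι_i - ⟨ε, c_i⟩ ι₀ ∈ ℤ` and `|b_i| ≤ ι₀`. Since
`⟨ε, c_i⟩ ≤ 2 ≤ 2 ι_i / ι₀`, either `a_i = 0`, which forces `ι_i = ι₀` and the factor to be `ι₀ w`
(so there are at most `μ₀` such rows and `w ^ μ₀` cancels them), or `a_i ≥ 1/2` and
`ι_i ≤ (ι₀ + 1) a_i`. In the second case the `k`-th Taylor coefficient of `(b_i w + a_i)⁻¹` at `0`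
has absolute value `|b_i| ^ k / a_i ^ (k+1) ≤ (2 ι₀) ^ k (ι₀ + 1) / ι_i`. The `m`-th Taylor
coefficient of a product of such factors is a sum over the `m`-element multisets of factors, and
there are at most `binom(2r-2, r-1)` of those as `m < r`.
-/

open Real Set Filter

section

open scoped Nat

theorem Multiset.countPerms_mul_prod_factorial_count {α : Type*} [DecidableEq α]
    {u : Finset α} {q : Multiset α} (hq : ∀ a ∈ q, a ∈ u) :
    q.countPerms * ∏ a ∈ u, (q.count a)! = (Multiset.card q)! := by
  have hsupp : q.toFinset ⊆ u := fun a ha => hq a (Multiset.mem_toFinset.1 ha)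
  have hcount : ⇑q.toFinsupp = (q.count ·) := funext q.toFinsupp_apply
  rw [← Finset.prod_subset hsupp fun a _ ha => by
      rw [Multiset.count_eq_zero.2 (mt Multiset.mem_toFinset.2 ha), Nat.factorial_zero],
    Multiset.countPerms, Finsupp.multinomial_eq, Multiset.toFinsupp_support, hcount, mul_comm,
    Nat.multinomial_spec, Multiset.toFinset_sum_count_eq]

theorem Finset.card_sym_le_choose {α : Type*} [Fintype α] [DecidableEq α] (G : Finset α)
    {m : ℕ} (hm : m < Fintype.card α) :
    (G.sym m).card ≤ (2 * Fintype.card α - 2).choose (Fintype.card α - 1) :=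
  calc (G.sym m).card ≤ Fintype.card (Sym α m) := Finset.card_le_univ _
    _ = (Fintype.card α + m - 1).choose m := Sym.card_sym_eq_choose m
    _ ≤ (2 * Fintype.card α - 2).choose m := Nat.choose_le_choose m (by omega)
    _ ≤ (2 * Fintype.card α - 2).choose ((2 * Fintype.card α - 2) / 2) :=
        Nat.choose_le_middle _ _
    _ = (2 * Fintype.card α - 2).choose (Fintype.card α - 1) := by congr 1; omega

theorem norm_iteratedFDerivWithin_prod_le_of_geometric {𝕜 E A ι : Type*}
    [NontriviallyNormedField 𝕜] [NormedAddCommGroup E] [NormedSpace 𝕜 E] [NormedCommRing A]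
    [NormedAlgebra 𝕜 A] [NormOneClass A] [DecidableEq ι] {u : Finset ι} {f : ι → E → A}
    {s : Set E} {x : E} {n : ℕ} (hf : ∀ i ∈ u, ContDiffOn 𝕜 n (f i) s) (hs : UniqueDiffOn 𝕜 s)
    (hx : x ∈ s) {X : ι → ℝ} {Y : ℝ}
    (hfX : ∀ i ∈ u, ∀ k, ‖iteratedFDerivWithin 𝕜 k (f i) s x‖ ≤ k ! * Y ^ k * X i) :
    ‖iteratedFDerivWithin 𝕜 n (∏ i ∈ u, f i ·) s x‖ ≤
      (u.sym n).card * (n ! * Y ^ n * ∏ i ∈ u, X i) := by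
  refine (norm_iteratedFDerivWithin_prod_le hf hs hx le_rfl).trans ?_
  rw [← nsmul_eq_mul]
  refine Finset.sum_le_card_nsmul _ _ _ fun q hq => ?_
  set m : Multiset ι := ↑q
  have hmu : ∀ a ∈ m, a ∈ u := fun a ha => Finset.mem_sym_iff.1 hq a ha
  calc m.countPerms * ∏ i ∈ u, ‖iteratedFDerivWithin 𝕜 (m.count i) (f i) s x‖
      ≤ m.countPerms * ∏ i ∈ u, ((m.count i) ! * Y ^ (m.count i) * X i) := by
        gcongr with i hi
        exact hfX i hi _
    _ = (m.countPerms * ∏ i ∈ u, (m.count i) ! : ℕ) * Y ^ (∑ i ∈ u, m.count i) *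
          ∏ i ∈ u, X i := by
        rw [Finset.prod_mul_distrib, Finset.prod_mul_distrib, Finset.prod_pow_eq_pow_sum]
        push_cast
        ring
    _ = n ! * Y ^ n * ∏ i ∈ u, X i := by
        rw [Multiset.countPerms_mul_prod_factorial_count hmu, Multiset.sum_count_eq_card hmu,
          Sym.card_coe]

variable {𝕜 : Type*} [RCLike 𝕜]

theorem norm_iteratedDeriv_inv_affine (k : ℕ) (c d x : 𝕜) :
    ‖iteratedDeriv k (fun x => (c * x + d)⁻¹) x‖ = k ! * ‖c‖ ^ k / ‖c * x + d‖ ^ (k + 1) := by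
  rw [iteratedDeriv_eq_iterate, iter_deriv_inv_linear]
  have hexp : (-1 - k : ℤ) = -((k + 1 : ℕ) : ℤ) := by push_cast; ring
  rw [norm_mul, norm_mul, norm_mul, norm_zpow, hexp, zpow_neg, zpow_natCast]
  simp [div_eq_mul_inv]

theorem norm_iteratedFDerivWithin_pow_mul_le {s : Set 𝕜} (hs : UniqueDiffOn 𝕜 s) (h0 : 0 ∈ s)
    {g : 𝕜 → 𝕜} {j : ℕ} (hg : ContDiffOn 𝕜 j g s) (P : ℕ) :
    ‖iteratedFDerivWithin 𝕜 j (fun w => w ^ P * g w) s 0‖ ≤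
      j.descFactorial P * ‖iteratedFDerivWithin 𝕜 (j - P) g s 0‖ := by
  refine (norm_iteratedFDerivWithin_mul_le (contDiffOn_fun_id.pow P) hg hs h0 le_rfl).trans
    (le_of_eq ?_)
  have hpow : ∀ l, ‖iteratedFDerivWithin 𝕜 l (fun w : 𝕜 => w ^ P) s 0‖ =
      ‖(P.descFactorial l : 𝕜) * 0 ^ (P - l)‖ := fun l => by
    rw [norm_iteratedFDerivWithin_eq_norm_iteratedDerivWithin, iteratedDerivWithin_pow h0 hs]
  rw [Finset.sum_eq_single P]
  · rw [hpow, Nat.sub_self, pow_zero, mul_one, Nat.descFactorial_self,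
      Nat.descFactorial_eq_factorial_mul_choose]
    simp [mul_comm]
  · intro l _ hlP
    rcases hlP.lt_or_gt with h | h
    · rw [hpow, zero_pow (by omega)]; simp
    · rw [hpow, Nat.descFactorial_eq_zero_iff_lt.2 h]; simp
  · intro hP
    rw [Nat.choose_eq_zero_of_lt (by simpa using hP)]
    simp

theorem norm_iteratedDeriv_pow_mul_prod_inv_affine_le {ι : Type*} [DecidableEq ι]
    {G : Finset ι} {c d : ι → 𝕜} (hd : ∀ i ∈ G, d i ≠ 0) {X : ι → ℝ} {Y : ℝ} (hY : 0 ≤ Y)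
    (hcd : ∀ i ∈ G, ∀ k : ℕ, ‖c i‖ ^ k / ‖d i‖ ^ (k + 1) ≤ Y ^ k * X i) (P j : ℕ) :
    ‖iteratedDeriv j (fun w => w ^ P * ∏ i ∈ G, (c i * w + d i)⁻¹) 0‖ ≤
      j ! * (G.sym (j - P)).card * Y ^ (j - P) * ∏ i ∈ G, X i := by
  set s : Set 𝕜 := ⋂ i ∈ G, {w | c i * w + d i ≠ 0}
  have hs : IsOpen s :=
    isOpen_biInter_finset fun i _ => isOpen_ne_fun (by fun_prop) (by fun_prop)
  have h0 : (0 : 𝕜) ∈ s := by simpa [s] using hd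
  have hf : ∀ i ∈ G, ContDiffOn 𝕜 ⊤ (fun w => (c i * w + d i)⁻¹) s := fun i hi =>
    ContDiffOn.inv (by fun_prop) fun w hw => Set.mem_iInter₂.1 hw i hi
  have hX : ∀ i ∈ G, 0 ≤ X i := fun i hi => by
    have := hcd i hi 0
    simp only [pow_zero, zero_add, pow_one, one_mul] at this
    exact (div_nonneg zero_le_one (norm_nonneg _)).trans this
  have hfX : ∀ i ∈ G, ∀ k, ‖iteratedFDerivWithin 𝕜 k (fun w => (c i * w + d i)⁻¹) s 0‖ ≤
      k ! * Y ^ k * X i := fun i hi k => by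
    rw [iteratedFDerivWithin_of_isOpen k hs h0, norm_iteratedFDeriv_eq_norm_iteratedDeriv,
      norm_iteratedDeriv_inv_affine, mul_zero, zero_add, mul_assoc, mul_div_assoc]
    exact mul_le_mul_of_nonneg_left (hcd i hi k) (by positivity)
  have hfac : (j.descFactorial P * (j - P) ! : ℝ) ≤ j ! := by
    rcases le_or_gt P j with hPj | hjP
    · rw [mul_comm]; exact_mod_cast (Nat.factorial_mul_descFactorial hPj).le
    · simp [Nat.descFactorial_eq_zero_iff_lt.2 hjP]
  rw [← norm_iteratedFDeriv_eq_norm_iteratedDeriv, ← iteratedFDerivWithin_of_isOpen j hs h0]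
  refine (norm_iteratedFDerivWithin_pow_mul_le hs.uniqueDiffOn h0
    (contDiffOn_prod fun i hi => (hf i hi).of_le le_top) P).trans ?_
  calc (j.descFactorial P : ℝ) *
        ‖iteratedFDerivWithin 𝕜 (j - P) (fun w => ∏ i ∈ G, (c i * w + d i)⁻¹) s 0‖
      ≤ j.descFactorial P *
          ((G.sym (j - P)).card * ((j - P) ! * Y ^ (j - P) * ∏ i ∈ G, X i)) :=
        mul_le_mul_of_nonneg_left (norm_iteratedFDerivWithin_prod_le_of_geometric
          (fun i hi => (hf i hi).of_le le_top) hs.uniqueDiffOn h0 hfX) (by positivity)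
    _ = (j.descFactorial P * (j - P) ! : ℝ) * (G.sym (j - P)).card * Y ^ (j - P) *
          ∏ i ∈ G, X i := by ring
    _ ≤ j ! * (G.sym (j - P)).card * Y ^ (j - P) * ∏ i ∈ G, X i := by
        have := Finset.prod_nonneg hX
        gcongr

theorem analyticAt_pow_mul_prod_inv_affine {ι : Type*} {G : Finset ι} {c d : ι → 𝕜}
    (hd : ∀ i ∈ G, d i ≠ 0) (P : ℕ) :
    AnalyticAt 𝕜 (fun w => w ^ P * ∏ i ∈ G, (c i * w + d i)⁻¹) 0 :=
  (analyticAt_id.pow P).mul <| Finset.analyticAt_fun_prod _ fun i hi =>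
    (analyticAt_const.mul analyticAt_id).add analyticAt_const |>.inv (by simpa using hd i hi)

end

theorem two_mul_pow_mul_add_one_pow_le {x : ℝ} (hx : 1 ≤ x) {m g r : ℕ} (hm : m ≤ r)
    (hg : g ≤ r) : (2 * x) ^ m * (x + 1) ^ g ≤ (x * (x + 1) ^ 2) ^ r :=
  calc (2 * x) ^ m * (x + 1) ^ g ≤ (x * (x + 1)) ^ r * (x + 1) ^ r := by
        have h2x : 2 * x ≤ x * (x + 1) := by nlinarith
        gcongr
        · exact (pow_le_pow_left₀ (by positivity) h2x m).trans
            (pow_le_pow_right₀ (by nlinarith) hm)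
        · linarith
    _ = (x * (x + 1) ^ 2) ^ r := by rw [← mul_pow]; ring

namespace LaurentCoefficient

open scoped Nat

variable {n r : ℕ} {ι : Fin r → ℕ} {ι0 μ0 : ℕ} {c : Fin r → Fin n → ℕ} {ε : Fin n → Bool}
  {i : Fin r}

def signedRowSum (c : Fin r → Fin n → ℕ) (ε : Fin n → Bool) (i : Fin r) : ℤ :=
  ∑ j, if ε j then (c i j : ℤ) else -(c i j : ℤ)

theorem cast_signedRowSum : (signedRowSum c ε i : ℝ) = ∑ j, sg (ε j) * c i j := by
  simp only [signedRowSum, Int.cast_sum]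
  refine Finset.sum_congr rfl fun j _ => ?_
  cases ε j <;> simp [sg]

theorem abs_signedRowSum_le (hrow : ∑ j, c i j = 2) : |signedRowSum c ε i| ≤ 2 :=
  calc |signedRowSum c ε i| ≤ ∑ j, |if ε j then (c i j : ℤ) else -(c i j : ℤ)| :=
        Finset.abs_sum_le_sum_abs _ _
    _ = ∑ j, (c i j : ℤ) := Finset.sum_congr rfl fun j _ => by split_ifs <;> simp
    _ = 2 := by exact_mod_cast hrow

/-- The rows whose factor `ι_i - ⟨ε, c_i⟩ z` vanishes at `z = ι₀ / 2`. -/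
def polarRows (ι : Fin r → ℕ) (ι0 : ℕ) (c : Fin r → Fin n → ℕ) (ε : Fin n → Bool) :
    Finset (Fin r) :=
  {i | 2 * (ι i : ℤ) = signedRowSum c ε i * ι0}

noncomputable def offset (ι : Fin r → ℕ) (ι0 : ℕ) (c : Fin r → Fin n → ℕ) (ε : Fin n → Bool)
    (i : Fin r) : ℝ :=
  ι i - signedRowSum c ε i * ι0 / 2

noncomputable def slope (ι0 : ℕ) (c : Fin r → Fin n → ℕ) (ε : Fin n → Bool) (i : Fin r) : ℝ :=
  signedRowSum c ε i * ι0 / 2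

theorem factor_eq_slope_mul_add_offset (w : ℝ) :
    (ι i : ℝ) - (∑ j, sg (ε j) * c i j) * (ι0 * (1 - w) / 2) =
      slope ι0 c ε i * w + offset ι ι0 c ε i := by
  rw [← cast_signedRowSum, slope, offset]
  ring

theorem abs_slope_le (hrow : ∑ j, c i j = 2) : |slope ι0 c ε i| ≤ ι0 := by
  have hs : |(signedRowSum c ε i : ℝ)| ≤ 2 := by exact_mod_cast abs_signedRowSum_le hrow
  rw [slope, abs_div, abs_mul, Nat.abs_cast, abs_two]
  nlinarith [(Nat.cast_nonneg ι0 : (0 : ℝ) ≤ ι0)]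

theorem signedRowSum_eq_two_and_eq_of_mem_polarRows (h1 : 1 ≤ ι0) (hle : ι0 ≤ ι i)
    (hrow : ∑ j, c i j = 2) (hi : i ∈ polarRows ι ι0 c ε) :
    signedRowSum c ε i = 2 ∧ ι i = ι0 := by
  have h2 : 2 * (ι i : ℤ) = signedRowSum c ε i * ι0 := by simpa [polarRows] using hi
  obtain ⟨hs1, hs2⟩ := abs_le.1 (abs_signedRowSum_le (ε := ε) hrow)
  have : (1 : ℤ) ≤ ι0 := by exact_mod_cast h1
  have : (ι0 : ℤ) ≤ ι i := by exact_mod_cast hle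
  interval_cases signedRowSum c ε i <;> omega

theorem slope_mul_add_offset_of_mem_polarRows (h1 : 1 ≤ ι0) (hle : ι0 ≤ ι i)
    (hrow : ∑ j, c i j = 2) (hi : i ∈ polarRows ι ι0 c ε) (w : ℝ) :
    slope ι0 c ε i * w + offset ι ι0 c ε i = ι0 * w := by
  obtain ⟨hs, hι⟩ := signedRowSum_eq_two_and_eq_of_mem_polarRows h1 hle hrow hi
  rw [slope, offset, hs, hι]
  push_cast
  ring

theorem offset_bounds_of_notMem_polarRows (h1 : 1 ≤ ι0) (hle : ι0 ≤ ι i)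
    (hrow : ∑ j, c i j = 2) (hi : i ∉ polarRows ι ι0 c ε) :
    1 / 2 ≤ offset ι ι0 c ε i ∧ (ι i : ℝ) ≤ (ι0 + 1) * offset ι ι0 c ε i := by
  have hne : 2 * (ι i : ℤ) ≠ signedRowSum c ε i * ι0 := by simpa [polarRows] using hi
  obtain ⟨hs1, hs2⟩ := abs_le.1 (abs_signedRowSum_le (ε := ε) hrow)
  have hι0 : (1 : ℤ) ≤ ι0 := by exact_mod_cast h1
  have hιi : (ι0 : ℤ) ≤ ι i := by exact_mod_cast hle
  have hpos : 1 ≤ 2 * (ι i : ℤ) - signedRowSum c ε i * ι0 := by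
    interval_cases signedRowSum c ε i <;> omega
  have hcases : signedRowSum c ε i * ι0 ≤ ι0 ∨
      (signedRowSum c ε i = 2 ∧ (ι0 : ℤ) + 1 ≤ ι i) := by
    interval_cases signedRowSum c ε i <;> omega
  have hmul : 2 * (ι i : ℤ) ≤ (2 * ι i - signedRowSum c ε i * ι0) * (ι0 + 1) := by
    rcases hcases with h | ⟨h, h'⟩
    · nlinarith
    · rw [h]; nlinarith
  have hpos' : (1 : ℝ) ≤ 2 * ι i - signedRowSum c ε i * ι0 := by exact_mod_cast hpos
  have hmul' : 2 * (ι i : ℝ) ≤ (2 * ι i - signedRowSum c ε i * ι0) * (ι0 + 1) := by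
    exact_mod_cast hmul
  constructor <;> rw [offset] <;> linarith

theorem norm_slope_pow_div_norm_offset_pow_succ_le (h1 : 1 ≤ ι0) (hle : ι0 ≤ ι i)
    (hrow : ∑ j, c i j = 2) (hi : i ∉ polarRows ι ι0 c ε) (k : ℕ) :
    ‖slope ι0 c ε i‖ ^ k / ‖offset ι ι0 c ε i‖ ^ (k + 1) ≤
      (2 * ι0) ^ k * ((ι0 + 1) / ι i) := by
  obtain ⟨ha, hιa⟩ := offset_bounds_of_notMem_polarRows h1 hle hrow hi
  have ha0 : 0 < offset ι ι0 c ε i := by linarith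
  have hιi0 : (0 : ℝ) < ι i := by exact_mod_cast h1.trans hle
  have hb : |slope ι0 c ε i| ≤ 2 * ι0 * offset ι ι0 c ε i := by
    nlinarith [abs_slope_le (ι0 := ι0) (ε := ε) hrow, (Nat.cast_nonneg ι0 : (0 : ℝ) ≤ ι0)]
  rw [Real.norm_eq_abs, Real.norm_eq_abs, abs_of_pos ha0, pow_succ, ← div_div, ← div_pow]
  refine mul_le_mul (pow_le_pow_left₀ (by positivity) ((div_le_iff₀ ha0).2 hb) k) ?_
    (by positivity) (by positivity)
  rw [inv_eq_one_div, div_le_div_iff₀ ha0 hιi0]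
  linarith

theorem polarRows_subset (h1 : 1 ≤ ι0) (hle : ∀ i, ι0 ≤ ι i) (hrow : ∀ i, ∑ j, c i j = 2) :
    polarRows ι ι0 c ε ⊆ Finset.univ.filter (ι · = ι0) := fun i hi => by
  simpa using (signedRowSum_eq_two_and_eq_of_mem_polarRows h1 (hle i) (hrow i) hi).2

theorem inv_pow_card_polarRows_mul_prod_compl (h1 : 1 ≤ ι0) (hle : ∀ i, ι0 ≤ ι i)
    (hrow : ∀ i, ∑ j, c i j = 2) :
    (ι0 : ℝ)⁻¹ ^ (polarRows ι ι0 c ε).card * ∏ i ∈ (polarRows ι ι0 c ε)ᶜ, (ι i : ℝ)⁻¹ =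
      ∏ i, (ι i : ℝ)⁻¹ := by
  rw [← Finset.prod_mul_prod_compl (polarRows ι ι0 c ε), ← Finset.prod_const]
  congr 1
  refine Finset.prod_congr rfl fun i hi => ?_
  rw [(signedRowSum_eq_two_and_eq_of_mem_polarRows h1 (hle i) (hrow i) hi).2]

/-- The `ε`-summand of `w ↦ w ^ μ₀ φ (ι₀ (1 - w) / 2)`, up to its constant factor, after each
polar factor `ι₀ w` has been cancelled against `w ^ μ₀`. -/
noncomputable def regularTerm (ι : Fin r → ℕ) (ι0 μ0 : ℕ) (c : Fin r → Fin n → ℕ)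
    (ε : Fin n → Bool) (w : ℝ) : ℝ :=
  w ^ (μ0 - (polarRows ι ι0 c ε).card) *
    ∏ i ∈ (polarRows ι ι0 c ε)ᶜ, (slope ι0 c ε i * w + offset ι ι0 c ε i)⁻¹

noncomputable def regularPart (ι : Fin r → ℕ) (ι0 μ0 : ℕ) (c : Fin r → Fin n → ℕ) : ℝ → ℝ :=
  fun w => ∑ ε : Fin n → Bool, (∏ j, sg (ε j)) * (ι0 : ℝ)⁻¹ ^ (polarRows ι ι0 c ε).card *
    regularTerm ι ι0 μ0 c ε w

theorem regularPart_eq (h1 : 1 ≤ ι0) (hle : ∀ i, ι0 ≤ ι i) (hrow : ∀ i, ∑ j, c i j = 2)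
    (hK : ∀ ε, (polarRows ι ι0 c ε).card ≤ μ0) {w : ℝ} (hw : w ≠ 0) :
    regularPart ι ι0 μ0 c w = w ^ μ0 * ∑ ε : Fin n → Bool, (∏ j, sg (ε j)) *
      ∏ i, ((ι i : ℝ) - (∑ j, sg (ε j) * (c i j : ℝ)) * ((ι0 : ℝ) * (1 - w) / 2))⁻¹ := by
  rw [regularPart, Finset.mul_sum]
  refine Finset.sum_congr rfl fun ε _ => ?_
  have hpolar : ∏ i ∈ polarRows ι ι0 c ε, (slope ι0 c ε i * w + offset ι ι0 c ε i)⁻¹ =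
      ((ι0 : ℝ) * w)⁻¹ ^ (polarRows ι ι0 c ε).card := by
    rw [← Finset.prod_const]
    exact Finset.prod_congr rfl fun i hi => by
      rw [slope_mul_add_offset_of_mem_polarRows h1 (hle i) (hrow i) hi w]
  simp_rw [factor_eq_slope_mul_add_offset]
  rw [← Finset.prod_mul_prod_compl (polarRows ι ι0 c ε), hpolar, regularTerm,
    pow_sub₀ w hw (hK ε), mul_inv, mul_pow]
  ring

theorem analyticAt_regularTerm (h1 : 1 ≤ ι0) (hle : ∀ i, ι0 ≤ ι i)
    (hrow : ∀ i, ∑ j, c i j = 2) (ε : Fin n → Bool) :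
    AnalyticAt ℝ (regularTerm ι ι0 μ0 c ε) 0 :=
  analyticAt_pow_mul_prod_inv_affine (fun i hi => by
    have := (offset_bounds_of_notMem_polarRows h1 (hle i) (hrow i) (Finset.mem_compl.1 hi)).1
    positivity) _

theorem analyticAt_regularPart (h1 : 1 ≤ ι0) (hle : ∀ i, ι0 ≤ ι i)
    (hrow : ∀ i, ∑ j, c i j = 2) : AnalyticAt ℝ (regularPart ι ι0 μ0 c) 0 :=
  Finset.analyticAt_fun_sum _ fun ε _ =>
    analyticAt_const.fun_mul (analyticAt_regularTerm h1 hle hrow ε)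

theorem abs_iteratedDeriv_regularTerm_le (h1 : 1 ≤ ι0) (hle : ∀ i, ι0 ≤ ι i)
    (hrow : ∀ i, ∑ j, c i j = 2) (ε : Fin n → Bool) {j : ℕ} (hjr : j < r) :
    (ι0 : ℝ)⁻¹ ^ (polarRows ι ι0 c ε).card * |iteratedDeriv j (regularTerm ι ι0 μ0 c ε) 0| ≤
      j ! * ((2 * r - 2).choose (r - 1) * (ι0 * (ι0 + 1) ^ 2 : ℝ) ^ r *
        ∏ i, (ι i : ℝ)⁻¹) := by
  set K := (polarRows ι ι0 c ε).card
  set G := (polarRows ι ι0 c ε)ᶜ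
  set m := j - (μ0 - K)
  have hterm := norm_iteratedDeriv_pow_mul_prod_inv_affine_le (G := G) (c := slope ι0 c ε)
    (d := offset ι ι0 c ε) (X := fun i => (ι0 + 1) / ι i) (Y := 2 * ι0)
    (fun i hi => by
      have := (offset_bounds_of_notMem_polarRows h1 (hle i) (hrow i) (Finset.mem_compl.1 hi)).1
      positivity)
    (by positivity)
    (fun i hi => norm_slope_pow_div_norm_offset_pow_succ_le h1 (hle i) (hrow i)
      (Finset.mem_compl.1 hi))
    (μ0 - K) j
  have hcard : ((G.sym m).card : ℝ) ≤ (2 * r - 2).choose (r - 1) := by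
    exact_mod_cast Fintype.card_fin r ▸ G.card_sym_le_choose (by simp; omega)
  have hpow : (2 * ι0 : ℝ) ^ m * (ι0 + 1) ^ G.card ≤ (ι0 * (ι0 + 1) ^ 2) ^ r :=
    two_mul_pow_mul_add_one_pow_le (by exact_mod_cast h1) (by omega)
      (G.card_le_univ.trans (by simp))
  have hsplit : ∏ i ∈ G, ((ι0 + 1 : ℝ) / ι i) = (ι0 + 1) ^ G.card * ∏ i ∈ G, (ι i : ℝ)⁻¹ := by
    simp_rw [div_eq_mul_inv]
    rw [Finset.prod_mul_distrib, Finset.prod_const]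
  calc (ι0 : ℝ)⁻¹ ^ K * |iteratedDeriv j (regularTerm ι ι0 μ0 c ε) 0|
      ≤ (ι0 : ℝ)⁻¹ ^ K *
          (j ! * (G.sym m).card * (2 * ι0) ^ m * ∏ i ∈ G, ((ι0 + 1 : ℝ) / ι i)) :=
        mul_le_mul_of_nonneg_left hterm (by positivity)
    _ = j ! * ((G.sym m).card * ((2 * ι0) ^ m * (ι0 + 1) ^ G.card) *
          ((ι0 : ℝ)⁻¹ ^ K * ∏ i ∈ G, (ι i : ℝ)⁻¹)) := by
        rw [hsplit]; ring
    _ ≤ j ! * ((2 * r - 2).choose (r - 1) * (ι0 * (ι0 + 1) ^ 2 : ℝ) ^ r *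
          ∏ i, (ι i : ℝ)⁻¹) := by
        rw [inv_pow_card_polarRows_mul_prod_compl h1 hle hrow]
        gcongr

theorem abs_iteratedDeriv_regularPart_le (h1 : 1 ≤ ι0) (hle : ∀ i, ι0 ≤ ι i)
    (hrow : ∀ i, ∑ j, c i j = 2) {j : ℕ} (hjr : j < r) :
    |iteratedDeriv j (regularPart ι ι0 μ0 c) 0| ≤
      2 ^ n * (j ! * ((2 * r - 2).choose (r - 1) * (ι0 * (ι0 + 1) ^ 2 : ℝ) ^ r *
        ∏ i, (ι i : ℝ)⁻¹)) := by
  have hsummand : ∀ ε : Fin n → Bool, |iteratedDeriv j (fun w => (∏ j, sg (ε j)) *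
      (ι0 : ℝ)⁻¹ ^ (polarRows ι ι0 c ε).card * regularTerm ι ι0 μ0 c ε w) 0| ≤
      j ! * ((2 * r - 2).choose (r - 1) * (ι0 * (ι0 + 1) ^ 2 : ℝ) ^ r *
        ∏ i, (ι i : ℝ)⁻¹) := fun ε => by
    have hsign : |∏ j, sg (ε j)| = 1 := by
      rw [Finset.abs_prod]
      exact Finset.prod_eq_one fun j _ => by cases ε j <;> simp [sg]
    rw [iteratedDeriv_const_mul_field, abs_mul, abs_mul, hsign, one_mul, abs_pow,
      abs_inv, Nat.abs_cast]
    exact abs_iteratedDeriv_regularTerm_le h1 hle hrow ε hjr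
  unfold regularPart
  rw [iteratedDeriv_fun_sum fun ε _ =>
    (analyticAt_const.fun_mul (analyticAt_regularTerm h1 hle hrow ε)).contDiffAt]
  refine (Finset.abs_sum_le_sum_abs _ _).trans <|
    (Finset.sum_le_card_nsmul _ _ _ fun ε _ => hsummand ε).trans (le_of_eq ?_)
  simp

end LaurentCoefficient

open LaurentCoefficient

theorem laurent_coefficient_bound_general
    (n r : ℕ)
    (ι : Fin r → ℕ) (hι : ∀ i, 1 ≤ ι i)
    (c : Fin r → Fin n → ℕ)
    (hrow : ∀ i, ∑ j, c i j = 2)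
    (ι0 : ℕ) (hι0 : IsLeast (Set.range ι) ι0)
    (μ0 : ℕ) (hμ0 : μ0 = (Finset.univ.filter fun i => ι i = ι0).card)
    (φ : ℝ → ℝ)
    (hφ : φ = fun z : ℝ =>
      ∑ ε : Fin n → Bool,
        (∏ j, sg (ε j)) *
          ∏ i, ((ι i : ℝ) - (∑ j, sg (ε j) * (c i j : ℝ)) * z)⁻¹) :
    ∃ ψ : ℝ → ℝ, AnalyticAt ℝ ψ 0 ∧
      (∀ᶠ w in nhdsWithin (0 : ℝ) {(0 : ℝ)}ᶜ,
        ψ w = w ^ μ0 * φ ((ι0 : ℝ) * (1 - w) / 2)) ∧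
      ∀ j : ℕ, j < μ0 →
        |iteratedDeriv j ψ 0 / (Nat.factorial j : ℝ)| ≤
          (2 : ℝ) ^ n * (Nat.choose (2 * r - 2) (r - 1) : ℝ) *
            ((ι0 : ℝ) * ((ι0 : ℝ) + 1) ^ 2) ^ r * ∏ i, ((ι i : ℝ))⁻¹ := by
  obtain ⟨i0, rfl⟩ := hι0.1
  have hle : ∀ i, ι i0 ≤ ι i := fun i => hι0.2 ⟨i, rfl⟩
  have hK : ∀ ε, (polarRows ι (ι i0) c ε).card ≤ μ0 := fun ε =>
    hμ0 ▸ Finset.card_le_card (polarRows_subset (hι i0) hle hrow)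
  have hμ0r : μ0 ≤ r := hμ0 ▸ (Finset.card_filter_le _ _).trans (by simp)
  refine ⟨regularPart ι (ι i0) μ0 c, analyticAt_regularPart (hι i0) hle hrow,
    eventually_nhdsWithin_of_forall fun w hw => hφ ▸ regularPart_eq (hι i0) hle hrow hK hw,
    fun j hj => ?_⟩
  rw [abs_div, Nat.abs_cast, div_le_iff₀ (by positivity)]
  refine (abs_iteratedDeriv_regularPart_le (hι i0) hle hrow (hj.trans_le hμ0r)).trans
    (le_of_eq ?_)
  ring

/-- The paper's Lemma lem:Laurent: the function `ψ(w) = w^{μ₀}·φ(ι₀(1−w)/2)` has no pole at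
`w = 0`, i.e. it agrees near `0` with a function `ψ̃` analytic at `0`, and the Taylor
coefficients `ψ̃^{(j)}(0)/j!` for `0 ≤ j ≤ μ₀ − 1` (equivalently, the Laurent coefficients of
`φ` at `z = ι₀/2` of negative order) are bounded in absolute value by
`2^n·binom(2r−2,r−1)·(ι₀(ι₀+1)²)^r·∏ᵢ ιᵢ⁻¹`. -/
theorem laurent_coefficient_bound
    (n r : ℕ) (hn : 1 ≤ n) (hr : 1 ≤ r)
    (ι : Fin r → ℕ) (hι : ∀ i, 1 ≤ ι i)
    (c : Fin r → Fin n → ℕ)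
    (hc2 : ∀ i j, c i j ≤ 2)
    (hrow : ∀ i, ∑ j, c i j = 2)
    (hcol : ∀ j, 0 < ∑ i, c i j)
    (ι0 : ℕ) (hι0 : IsLeast (Set.range ι) ι0)
    (μ0 : ℕ) (hμ0 : μ0 = (Finset.univ.filter fun i => ι i = ι0).card)
    (φ : ℝ → ℝ)
    (hφ : φ = fun z : ℝ =>
      ∑ ε : Fin n → Bool,
        (∏ j, sg (ε j)) *
          ∏ i, ((ι i : ℝ) - (∑ j, sg (ε j) * (c i j : ℝ)) * z)⁻¹) :
    ∃ ψ : ℝ → ℝ, AnalyticAt ℝ ψ 0 ∧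
      (∀ᶠ w in nhdsWithin (0 : ℝ) {(0 : ℝ)}ᶜ,
        ψ w = w ^ μ0 * φ ((ι0 : ℝ) * (1 - w) / 2)) ∧
      ∀ j : ℕ, j < μ0 →
        |iteratedDeriv j ψ 0 / (Nat.factorial j : ℝ)| ≤
          (2 : ℝ) ^ n * (Nat.choose (2 * r - 2) (r - 1) : ℝ) *
            ((ι0 : ℝ) * ((ι0 : ℝ) + 1) ^ 2) ^ r * ∏ i, ((ι i : ℝ))⁻¹ :=
  laurent_coefficient_bound_general n r ι hι c hrow ι0 hι0 μ0 hμ0 φ hφ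
end

section
/- Let R > 1, let k be a nonnegative integer, and let f be holomorphic on Ω = {z ∈ ℂ : |z| < R} ∖ {x ∈ ℝ : |x| ≥ 1}. Assume there exist constants M > 0 and δ ∈ (0,1) such that for each ζ ∈ {−1, 1} and every z ∈ Ω with |z − ζ| < δ one has |f(z)| ≤ M·|1 − z/ζ|·(1 + |log|1 − z/ζ||)^k. Then there is a constant C such that the Taylor coefficients of f at 0 satisfy |f^{(N)}(0)/N!| ≤ C·(log N)^k/N² for all integers N ≥ 2. -/
/-!
Near `ζ = ±1`, Cauchy's estimate on the circle of radius `|z - ζ|/2` around `z` turns the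
hypothesis on `f` into `|f'''(z)| = O((1 + log (1/|z - ζ|))^k / |z - ζ|²)`; away from `±1`,
`f'''` is bounded on the closed unit disk by compactness. On the circle `|z| = r = 1 - 1/N`
one has `|z ∓ 1| ≥ 1/N`, so the logarithms are `O(log N)`, and Poisson's formula gives the exact
average `1/(1 - r²) ≤ N` of `|z ∓ 1|⁻²` over that circle. Cauchy's estimate on this circle, with
`r^{-N} ≤ e²`, then bounds the `(N - 3)`-th Taylor coefficient of `f'''` by `O(N log^k N)`, and
dividing by `N(N - 1)(N - 2)` gives the `N`-th coefficient of `f`.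
-/

open Set Metric Real
open scoped Nat

theorem norm_iteratedDeriv_le_circleAverage {E : Type*} [NormedAddCommGroup E] [NormedSpace ℂ E]
    [CompleteSpace E] {f : ℂ → E} {c : ℂ} {r : ℝ} (hr : 0 < r)
    (hf : DifferentiableOn ℂ f (closedBall c r)) (n : ℕ) :
    ‖iteratedDeriv n f c‖ ≤ n ! * circleAverage (‖f ·‖) c r / r ^ n := by
  lift r to NNReal using hr.le
  have hp := hf.hasFPowerSeriesOnBall (by exact_mod_cast hr)
  have hcoeff := (cauchyPowerSeries f c r n).le_opNorm (fun _ => (1 : ℂ))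
  have hcauchy := norm_cauchyPowerSeries_le f c r n
  simp only [norm_one, Finset.prod_const_one, mul_one] at hcoeff
  rw [iteratedDeriv_eq_iteratedFDeriv, ← hp.factorial_smul 1 n, RCLike.norm_nsmul ℂ, nsmul_eq_mul]
  refine (mul_le_mul_of_nonneg_left (hcoeff.trans hcauchy) (Nat.cast_nonneg _)).trans_eq ?_
  simp only [circleAverage_def, smul_eq_mul, NNReal.abs_eq, inv_pow]
  ring

lemma iteratedDeriv_iteratedDeriv {𝕜 F : Type*} [NontriviallyNormedField 𝕜]
    [NormedAddCommGroup F] [NormedSpace 𝕜 F] (m n : ℕ) (f : 𝕜 → F) :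
    iteratedDeriv m (iteratedDeriv n f) = iteratedDeriv (m + n) f := by
  simp only [iteratedDeriv_eq_iterate, Function.iterate_add]; rfl

lemma sq_norm_mul_sq_norm_sub_reflection {r : ℝ} {z ζ : ℂ} (hz : ‖z‖ = r) (hζ : ζ ≠ 0) :
    ‖ζ‖ ^ 2 * ‖z - ((r / ‖ζ‖) ^ 2 : ℝ) * ζ‖ ^ 2 = r ^ 2 * ‖z - ζ‖ ^ 2 := by
  set s := ‖ζ‖
  set t := (r / s) ^ 2 with ht
  have hts : t * s ^ 2 = r ^ 2 := by
    rw [ht, div_pow, div_mul_cancel₀ _ (pow_ne_zero 2 (norm_ne_zero_iff.mpr hζ))]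
  have hs : s ^ 2 = ζ.re ^ 2 + ζ.im ^ 2 := by
    simp only [s, Complex.sq_norm, Complex.normSq_apply]; ring
  have hz2 : z.re ^ 2 + z.im ^ 2 = r ^ 2 := by
    rw [← hz, Complex.sq_norm, Complex.normSq_apply]; ring
  simp only [Complex.sq_norm, Complex.normSq_apply, Complex.sub_re, Complex.sub_im,
    Complex.re_ofReal_mul, Complex.im_ofReal_mul]
  linear_combination (s ^ 2 - r ^ 2) * hz2 + (t ^ 2 * s ^ 2 - r ^ 2) * hs.symm
    + (t * s ^ 2 + r ^ 2 - 2 * (z.re * ζ.re + z.im * ζ.im)) * hts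

theorem circleAverage_inv_norm_sub_sq {r : ℝ} {ζ : ℂ} (hr : 0 < r) (hζ : r < ‖ζ‖) :
    circleAverage (fun z => (‖z - ζ‖ ^ 2)⁻¹) 0 r = (‖ζ‖ ^ 2 - r ^ 2)⁻¹ := by
  have hζ0 : ζ ≠ 0 := norm_pos_iff.mp (hr.trans hζ)
  have hs : 0 < ‖ζ‖ := hr.trans hζ
  -- Poisson's formula for the constant `1` at the reflection `w` of `ζ` in the circle.
  set w : ℂ := ((r / ‖ζ‖) ^ 2 : ℝ) * ζ
  have hnw : ‖w‖ = r ^ 2 / ‖ζ‖ := by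
    simp only [w, norm_mul, Complex.norm_real, Real.norm_eq_abs, abs_sq]
    field_simp
  have hw : w ∈ ball 0 r := by
    rw [mem_ball_zero_iff, hnw, div_lt_iff₀ hs]; nlinarith
  have hkernel : EqOn (poissonKernel 0 w • fun _ => (1 : ℝ))
      ((‖ζ‖ ^ 2 - r ^ 2) • fun z => (‖z - ζ‖ ^ 2)⁻¹) (sphere 0 |r|) := by
    intro z hz
    rw [abs_of_pos hr, mem_sphere_zero_iff_norm] at hz
    have key := sq_norm_mul_sq_norm_sub_reflection hz hζ0
    show poissonKernel 0 w z * 1 = (‖ζ‖ ^ 2 - r ^ 2) * (‖z - ζ‖ ^ 2)⁻¹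
    rw [mul_one, poissonKernel_def, sub_zero, sub_zero, hz, hnw]
    have hzw : ‖z - w‖ ^ 2 = r ^ 2 * ‖z - ζ‖ ^ 2 / ‖ζ‖ ^ 2 := by
      rw [eq_div_iff (by positivity), mul_comm]; exact key
    rw [hzw]
    field_simp
  have hpoisson := (InnerProductSpace.harmonicOnNhd_const (1 : ℝ)
    (s := closedBall 0 r)).circleAverage_poissonKernel_smul hw
  rw [circleAverage_congr_sphere hkernel, circleAverage_smul, smul_eq_mul] at hpoisson
  exact eq_inv_of_mul_eq_one_right hpoisson

lemma continuousOn_inv_norm_sub_sq_sphere {r : ℝ} {ζ : ℂ} (h : r ≠ ‖ζ‖) :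
    ContinuousOn (fun z => (‖z - ζ‖ ^ 2)⁻¹) (sphere 0 r) := by
  refine ContinuousOn.inv₀ (by fun_prop) fun z hz => pow_ne_zero 2 (norm_ne_zero_iff.mpr ?_)
  rintro hzζ
  rw [sub_eq_zero.mp hzζ, mem_sphere_zero_iff_norm] at hz
  exact h hz.symm

lemma one_add_abs_log_le {d t : ℝ} (hd : 0 < d) (ht : d / 2 ≤ t) (ht1 : t ≤ 1) :
    1 + |log t| ≤ 1 + log 2 - log d := by
  have := log_le_log (by positivity) ht
  rw [log_div hd.ne' two_ne_zero] at this
  rw [abs_of_nonpos (log_nonpos (by linarith) ht1)]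
  linarith

theorem norm_iteratedDeriv_le_of_norm_le_mul_log {E : Type*} [NormedAddCommGroup E]
    [NormedSpace ℂ E] [CompleteSpace E] {f : ℂ → E} {z ζ : ℂ} {M : ℝ} {k : ℕ} (n : ℕ)
    (hM : 0 ≤ M) (hzζ : z ≠ ζ) (hd : ‖z - ζ‖ < 2 / 3)
    (hf : DifferentiableOn ℂ f (closedBall z (‖z - ζ‖ / 2)))
    (hb : ∀ w ∈ sphere z (‖z - ζ‖ / 2), ‖f w‖ ≤ M * ‖w - ζ‖ * (1 + |log ‖w - ζ‖|) ^ k) :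
    ‖iteratedDeriv n f z‖ ≤
      n ! * (M * (3 / 2 * ‖z - ζ‖) * (1 + log 2 - log ‖z - ζ‖) ^ k) / (‖z - ζ‖ / 2) ^ n := by
  have hd0 : 0 < ‖z - ζ‖ := norm_pos_iff.mpr (sub_ne_zero.mpr hzζ)
  refine Complex.norm_iteratedDeriv_le_of_forall_mem_sphere_norm_le n (by positivity)
    (hf.mono closure_ball_subset_closedBall).diffContOnCl fun w hw => (hb w hw).trans ?_
  rw [mem_sphere_iff_norm] at hw
  have hupper : ‖w - ζ‖ ≤ 3 / 2 * ‖z - ζ‖ := by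
    linarith [norm_sub_le_norm_sub_add_norm_sub w z ζ]
  have hlower : ‖z - ζ‖ / 2 ≤ ‖w - ζ‖ := by
    linarith [norm_sub_le_norm_sub_add_norm_sub z w ζ, norm_sub_rev z w]
  gcongr
  exact one_add_abs_log_le hd0 hlower (by linarith)

def slitDisk (R : ℝ) : Set ℂ := {z : ℂ | ‖z‖ < R} \ {z : ℂ | z.im = 0 ∧ 1 ≤ |z.re|}

lemma isOpen_slitDisk (R : ℝ) : IsOpen (slitDisk R) :=
  (isOpen_lt continuous_norm continuous_const).sdiff
    ((isClosed_eq Complex.continuous_im continuous_const).inter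
      (isClosed_le continuous_const (continuous_abs.comp Complex.continuous_re)))

lemma min_norm_sub_one_norm_add_one_le {z w : ℂ} (hz : |z.re| < 1) (hw : w.im = 0)
    (hw1 : 1 ≤ |w.re|) : min ‖z - 1‖ ‖z + 1‖ ≤ ‖z - w‖ := by
  obtain ⟨hz₁, hz₂⟩ := abs_lt.mp hz
  rcases le_abs'.mp hw1 with h | h
  · refine min_le_of_right_le ((sq_le_sq₀ (norm_nonneg _) (norm_nonneg _)).mp ?_)
    simp only [Complex.sq_norm, Complex.normSq_apply, Complex.add_re, Complex.add_im,
      Complex.sub_re, Complex.sub_im, Complex.one_re, Complex.one_im, hw]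
    nlinarith
  · refine min_le_of_left_le ((sq_le_sq₀ (norm_nonneg _) (norm_nonneg _)).mp ?_)
    simp only [Complex.sq_norm, Complex.normSq_apply, Complex.sub_re, Complex.sub_im,
      Complex.one_re, Complex.one_im, hw]
    nlinarith

lemma closedBall_subset_slitDisk {R ρ : ℝ} {z : ℂ} (hz : ‖z‖ < 1) (hR : ‖z‖ + ρ < R)
    (hρ : ρ < min ‖z - 1‖ ‖z + 1‖) : closedBall z ρ ⊆ slitDisk R := by
  intro w hw
  rw [mem_closedBall, dist_eq_norm] at hw
  refine ⟨?_, fun ⟨him, hre⟩ => ?_⟩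
  · show ‖w‖ < R
    linarith [norm_le_norm_add_norm_sub' w z]
  · have := min_norm_sub_one_norm_add_one_le ((Complex.abs_re_le_norm z).trans_lt hz) him hre
    rw [norm_sub_rev] at hw
    linarith

lemma mem_slitDisk_of_norm_le_one {R : ℝ} (hR : 1 < R) {z : ℂ} (hz : ‖z‖ ≤ 1) (h₁ : z ≠ 1)
    (h₂ : z ≠ -1) : z ∈ slitDisk R := by
  refine ⟨hz.trans_lt hR, fun ⟨him, hre⟩ => ?_⟩
  have hre' : |z.re| = 1 := le_antisymm ((Complex.abs_re_le_norm z).trans hz) hre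
  rcases abs_eq zero_le_one |>.mp hre' with h | h
  · exact h₁ (Complex.ext h him)
  · exact h₂ (Complex.ext (by simpa using h) (by simpa using him))

lemma ball_subset_slitDisk {R : ℝ} (hR : 1 < R) : ball (0 : ℂ) 1 ⊆ slitDisk R := fun z hz => by
  rw [mem_ball_zero_iff] at hz
  exact mem_slitDisk_of_norm_le_one hR hz.le (by rintro rfl; simp at hz) (by rintro rfl; simp at hz)

lemma exists_norm_le_away_from_one_neg_one {R ε : ℝ} {g : ℂ → ℂ} (hR : 1 < R) (hε : 0 < ε)
    (hg : ContinuousOn g (slitDisk R)) :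
    ∃ B, 0 ≤ B ∧ ∀ z : ℂ, ‖z‖ ≤ 1 → ε ≤ ‖z - 1‖ → ε ≤ ‖z + 1‖ → ‖g z‖ ≤ B := by
  set K := closedBall (0 : ℂ) 1 ∩ {z | ε ≤ ‖z - 1‖} ∩ {z | ε ≤ ‖z + 1‖}
  have hK : IsCompact K :=
    ((isCompact_closedBall 0 1).inter_right (isClosed_le continuous_const (by fun_prop))).inter_right
      (isClosed_le continuous_const (by fun_prop))
  have hKsub : K ⊆ slitDisk R := fun z ⟨⟨hz, h₁⟩, h₂⟩ =>
    mem_slitDisk_of_norm_le_one hR (mem_closedBall_zero_iff.mp hz)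
      (by rintro rfl; simp only [mem_ofPred_eq, sub_self, norm_zero] at h₁; linarith)
      (by rintro rfl; simp only [mem_ofPred_eq, neg_add_cancel, norm_zero] at h₂; linarith)
  obtain ⟨B, hB⟩ := hK.exists_bound_of_continuousOn (hg.mono hKsub)
  exact ⟨max B 0, le_max_right _ _, fun z hz h₁ h₂ =>
    (hB z ⟨⟨mem_closedBall_zero_iff.mpr hz, h₁⟩, h₂⟩).trans (le_max_left _ _)⟩

lemma norm_iteratedDeriv_three_le_near {R M δ : ℝ} {k : ℕ} {f : ℂ → ℂ} {ζ z : ℂ}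
    (hf : DifferentiableOn ℂ f (slitDisk R)) (hM : 0 ≤ M) (hδ1 : δ < 1) (hζ : ζ = 1 ∨ ζ = -1)
    (hb : ∀ w ∈ slitDisk R, ‖w - ζ‖ < δ → ‖f w‖ ≤ M * ‖w - ζ‖ * (1 + |log ‖w - ζ‖|) ^ k)
    (hz : ‖z‖ < 1) (hzζ : ‖z - ζ‖ < min δ (R - 1) / 2) :
    ‖iteratedDeriv 3 f z‖ ≤ 72 * M * (1 + log 2 - log ‖z - ζ‖) ^ k / ‖z - ζ‖ ^ 2 := by
  set d := ‖z - ζ‖ with hd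
  have hζ1 : ‖ζ‖ = 1 := by rcases hζ with rfl | rfl <;> simp
  have hd0 : 0 < d := by linarith [norm_sub_norm_le ζ z, norm_sub_rev ζ z]
  have hδ : d < δ / 2 := hzζ.trans_le (by gcongr; exact min_le_left _ _)
  have hR : d < (R - 1) / 2 := hzζ.trans_le (by gcongr; exact min_le_right _ _)
  have htwo : (2 : ℝ) ≤ ‖z - 1‖ + ‖z + 1‖ := by
    calc (2 : ℝ) = ‖(z + 1) - (z - 1)‖ := by norm_num
      _ ≤ ‖z - 1‖ + ‖z + 1‖ := (norm_sub_le _ _).trans_eq (add_comm _ _)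
  have hball : closedBall z (d / 2) ⊆ slitDisk R := by
    refine closedBall_subset_slitDisk hz (by linarith) (lt_min ?_ ?_) <;>
      rcases hζ with rfl | rfl <;> simp only [d, sub_neg_eq_add] at * <;> linarith
  have hsphere : ∀ w ∈ sphere z (d / 2),
      ‖f w‖ ≤ M * ‖w - ζ‖ * (1 + |log ‖w - ζ‖|) ^ k := fun w hw => by
    refine hb w (hball (sphere_subset_closedBall hw)) ?_
    rw [mem_sphere_iff_norm] at hw
    linarith [norm_sub_le_norm_sub_add_norm_sub w z ζ]
  have hzζ : z ≠ ζ := fun h => by simp [d, h] at hd0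
  have := norm_iteratedDeriv_le_of_norm_le_mul_log 3 hM hzζ (by linarith)
    (hf.mono hball) hsphere
  rw [← hd] at this
  -- `72 = 3! · (3 / 2) · 2 ^ 3`
  refine this.trans_eq ?_
  simp only [Nat.factorial]
  field_simp
  ring

lemma one_add_log_two_sub_log_le {N : ℕ} (hN : 3 ≤ N) {d : ℝ} (hd : (N : ℝ)⁻¹ ≤ d) :
    1 + log 2 - log d ≤ 3 * log N := by
  have hN' : (3 : ℝ) ≤ N := by exact_mod_cast hN
  have hlogN : 1 ≤ log N := by
    rw [le_log_iff_exp_le (by positivity)]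
    linarith [exp_one_lt_d9]
  have hlogd : -log N ≤ log d := by
    rw [← log_inv]; exact log_le_log (by positivity) hd
  linarith [log_two_lt_d9]

theorem norm_le_on_sphere_one_sub_inv {g : ℂ → ℂ} {A B ε : ℝ} {k N : ℕ} (hA : 0 ≤ A) (hB : 0 ≤ B)
    (hN : 3 ≤ N)
    (hnear : ∀ ζ : ℂ, (ζ = 1 ∨ ζ = -1) → ∀ z : ℂ, ‖z‖ < 1 → ‖z - ζ‖ < ε →
      ‖g z‖ ≤ A * (1 + log 2 - log ‖z - ζ‖) ^ k / ‖z - ζ‖ ^ 2)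
    (hfar : ∀ z : ℂ, ‖z‖ ≤ 1 → ε ≤ ‖z - 1‖ → ε ≤ ‖z + 1‖ → ‖g z‖ ≤ B)
    {z : ℂ} (hz : ‖z‖ = 1 - (N : ℝ)⁻¹) :
    ‖g z‖ ≤ B + A * (3 * log N) ^ k * ((‖z - 1‖ ^ 2)⁻¹ + (‖z + 1‖ ^ 2)⁻¹) := by
  have hN0 : (0 : ℝ) < (N : ℝ)⁻¹ := by positivity
  have hnear' : ∀ ζ : ℂ, (ζ = 1 ∨ ζ = -1) → ‖z - ζ‖ < ε →
      ‖g z‖ ≤ A * (3 * log N) ^ k * (‖z - ζ‖ ^ 2)⁻¹ := by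
    intro ζ hζ hzζ
    have hζ1 : ‖ζ‖ = 1 := by rcases hζ with rfl | rfl <;> simp
    have hd : (N : ℝ)⁻¹ ≤ ‖z - ζ‖ := by linarith [norm_sub_norm_le ζ z, norm_sub_rev ζ z]
    have hd2 : ‖z - ζ‖ ≤ 2 := by linarith [norm_sub_le z ζ]
    have hbase : 0 ≤ 1 + log 2 - log ‖z - ζ‖ := by
      linarith [log_le_log (hN0.trans_le hd) hd2]
    refine (hnear ζ hζ z (by linarith) hzζ).trans ?_
    rw [div_eq_mul_inv]
    gcongr
    exact one_add_log_two_sub_log_le hN hd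
  have hlogN : 0 ≤ log N := log_nonneg (by exact_mod_cast (by omega : 1 ≤ N))
  have h₁ : 0 ≤ A * (3 * log N) ^ k * (‖z - 1‖ ^ 2)⁻¹ := by positivity
  have h₂ : 0 ≤ A * (3 * log N) ^ k * (‖z + 1‖ ^ 2)⁻¹ := by positivity
  rw [mul_add]
  by_cases hz₁ : ‖z - 1‖ < ε
  · linarith [hnear' 1 (Or.inl rfl) hz₁]
  by_cases hz₂ : ‖z + 1‖ < ε
  · have := hnear' (-1) (Or.inr rfl) (by rwa [sub_neg_eq_add])
    rw [sub_neg_eq_add] at this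
    linarith
  linarith [hfar z (by linarith) (not_lt.mp hz₁) (not_lt.mp hz₂)]

theorem circleAverage_norm_one_sub_inv_le {g : ℂ → ℂ} {A B ε : ℝ} {k N : ℕ} (hA : 0 ≤ A) (hB : 0 ≤ B)
    (hN : 3 ≤ N)
    (hnear : ∀ ζ : ℂ, (ζ = 1 ∨ ζ = -1) → ∀ z : ℂ, ‖z‖ < 1 → ‖z - ζ‖ < ε →
      ‖g z‖ ≤ A * (1 + log 2 - log ‖z - ζ‖) ^ k / ‖z - ζ‖ ^ 2)
    (hfar : ∀ z : ℂ, ‖z‖ ≤ 1 → ε ≤ ‖z - 1‖ → ε ≤ ‖z + 1‖ → ‖g z‖ ≤ B)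
    (hg : ContinuousOn g (sphere 0 (1 - (N : ℝ)⁻¹))) :
    circleAverage (‖g ·‖) 0 (1 - (N : ℝ)⁻¹) ≤ B + 2 * A * (3 * log N) ^ k * N := by
  set r := 1 - (N : ℝ)⁻¹
  have hN' : (3 : ℝ) ≤ N := by exact_mod_cast hN
  have hr0 : 0 < r := by
    have : (N : ℝ)⁻¹ ≤ 3⁻¹ := inv_anti₀ (by norm_num) hN'
    linarith
  have hr1 : r < 1 := by simp only [r]; linarith [inv_pos.mpr (by linarith : (0 : ℝ) < N)]
  have hc₁ := continuousOn_inv_norm_sub_sq_sphere (r := r) (ζ := 1) (by rw [norm_one]; exact hr1.ne)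
  have hc₂ := continuousOn_inv_norm_sub_sq_sphere (r := r) (ζ := -1) (by rw [norm_neg, norm_one]; exact hr1.ne)
  simp only [sub_neg_eq_add] at hc₂
  have hpoisson : ∀ ζ : ℂ, ‖ζ‖ = 1 → circleAverage (fun z => (‖z - ζ‖ ^ 2)⁻¹) 0 r ≤ N := by
    intro ζ hζ
    rw [circleAverage_inv_norm_sub_sq hr0 (by rw [hζ]; exact hr1), hζ,
      inv_le_comm₀ (by nlinarith) (by linarith)]
    simp only [r]
    nlinarith
  calc circleAverage (‖g ·‖) 0 r
      ≤ circleAverage (fun z => B + A * (3 * log N) ^ k *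
          ((‖z - 1‖ ^ 2)⁻¹ + (‖z + 1‖ ^ 2)⁻¹)) 0 r := by
        refine circleAverage_mono (hg.norm.circleIntegrable hr0.le)
          ((continuousOn_const.add (continuousOn_const.mul (hc₁.add hc₂))).circleIntegrable hr0.le)
          fun z hz => norm_le_on_sphere_one_sub_inv hA hB hN hnear hfar ?_
        rwa [abs_of_pos hr0, mem_sphere_zero_iff_norm] at hz
    _ = B + A * (3 * log N) ^ k * (circleAverage (fun z => (‖z - 1‖ ^ 2)⁻¹) 0 r
          + circleAverage (fun z => (‖z + 1‖ ^ 2)⁻¹) 0 r) := by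
        have hsmul := circleAverage_fun_smul (a := A * (3 * log N) ^ k) (c := 0) (R := r)
          (f := fun z => (‖z - 1‖ ^ 2)⁻¹ + (‖z + 1‖ ^ 2)⁻¹)
        simp only [smul_eq_mul] at hsmul
        rw [circleAverage_fun_add (f₁ := fun _ => B)
          (f₂ := fun z => A * (3 * log N) ^ k * ((‖z - 1‖ ^ 2)⁻¹ + (‖z + 1‖ ^ 2)⁻¹))
          (continuousOn_const.circleIntegrable hr0.le)
          ((continuousOn_const.mul (hc₁.add hc₂)).circleIntegrable hr0.le), circleAverage_const,
          hsmul, circleAverage_fun_add (hc₁.circleIntegrable hr0.le) (hc₂.circleIntegrable hr0.le)]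
    _ ≤ B + 2 * A * (3 * log N) ^ k * N := by
        have h₁ := hpoisson 1 norm_one
        have h₂ := hpoisson (-1) (by simp)
        simp only [sub_neg_eq_add] at h₂
        have : 0 ≤ A * (3 * log N) ^ k := by
          have := log_nonneg (by linarith : (1 : ℝ) ≤ N)
          positivity
        nlinarith

lemma factorial_div_factorial_add_three_le (m : ℕ) :
    (m ! : ℝ) / (m + 3)! ≤ 6 / ((m : ℝ) + 3) ^ 3 := by
  have hm : (0 : ℝ) < m ! := by exact_mod_cast m.factorial_pos
  have hfac : ((m + 3)! : ℝ) = (m + 1) * (m + 2) * (m + 3) * m ! := by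
    push_cast [Nat.factorial_succ]; ring
  rw [hfac, div_le_div_iff₀ (by positivity) (by positivity)]
  have : (0 : ℝ) ≤ m := m.cast_nonneg
  nlinarith [mul_nonneg (mul_nonneg this this) hm.le, mul_nonneg this hm.le]

lemma inv_one_sub_inv_pow_le_exp_two {N m : ℕ} (hN : 2 ≤ N) (hm : m ≤ N) :
    ((1 - (N : ℝ)⁻¹) ^ m)⁻¹ ≤ exp 2 := by
  have hN' : (2 : ℝ) ≤ N := by exact_mod_cast hN
  have hpos : 0 < 1 - (N : ℝ)⁻¹ := by
    have : (N : ℝ)⁻¹ ≤ 2⁻¹ := inv_anti₀ (by norm_num) hN'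
    linarith
  have hinv : (1 - (N : ℝ)⁻¹)⁻¹ ≤ 1 - (-2) / N := by
    rw [inv_le_iff_one_le_mul₀ hpos]
    field_simp
    nlinarith
  calc ((1 - (N : ℝ)⁻¹) ^ m)⁻¹ = ((1 - (N : ℝ)⁻¹)⁻¹) ^ m := (inv_pow _ _).symm
    _ ≤ (1 - (-2) / N) ^ m := by gcongr
    _ ≤ (1 - (-2) / N) ^ N := pow_le_pow_right₀ (by
        have : (0 : ℝ) ≤ 2 / N := by positivity
        rw [neg_div]; linarith) hm
    _ ≤ exp 2 := by simpa using one_sub_div_pow_le_exp_neg (n := N) (t := -2) (by linarith)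

theorem norm_iteratedDeriv_div_factorial_le_circleAverage {f : ℂ → ℂ} {r : ℝ} (hr : 0 < r)
    (hf : DifferentiableOn ℂ (iteratedDeriv 3 f) (closedBall 0 r)) {N : ℕ} (hN : 3 ≤ N) :
    ‖iteratedDeriv N f 0‖ / N ! ≤
      6 / (N : ℝ) ^ 3 * circleAverage (‖iteratedDeriv 3 f ·‖) 0 r / r ^ (N - 3) := by
  obtain ⟨m, rfl⟩ : ∃ m, N = m + 3 := ⟨N - 3, by omega⟩
  have havg : 0 ≤ circleAverage (‖iteratedDeriv 3 f ·‖) 0 r :=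
    circleAverage_nonneg_of_nonneg fun _ _ => norm_nonneg _
  rw [← iteratedDeriv_iteratedDeriv, Nat.add_sub_cancel]
  calc ‖iteratedDeriv m (iteratedDeriv 3 f) 0‖ / (m + 3)!
      ≤ m ! * circleAverage (‖iteratedDeriv 3 f ·‖) 0 r / r ^ m / (m + 3)! := by
        gcongr; exact norm_iteratedDeriv_le_circleAverage hr hf m
    _ = (m ! / (m + 3)!) * circleAverage (‖iteratedDeriv 3 f ·‖) 0 r / r ^ m := by ring
    _ ≤ 6 / ((m + 3 : ℕ) : ℝ) ^ 3 * circleAverage (‖iteratedDeriv 3 f ·‖) 0 r / r ^ m := by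
        gcongr ?_ * _ / _
        exact_mod_cast factorial_div_factorial_add_three_le m

theorem norm_iteratedDeriv_div_factorial_le {f : ℂ → ℂ} {A B ε : ℝ} {k N : ℕ} (hA : 0 ≤ A)
    (hB : 0 ≤ B) (hN : 3 ≤ N) (hf : DifferentiableOn ℂ (iteratedDeriv 3 f) (ball 0 1))
    (hnear : ∀ ζ : ℂ, (ζ = 1 ∨ ζ = -1) → ∀ z : ℂ, ‖z‖ < 1 → ‖z - ζ‖ < ε →
      ‖iteratedDeriv 3 f z‖ ≤ A * (1 + log 2 - log ‖z - ζ‖) ^ k / ‖z - ζ‖ ^ 2)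
    (hfar : ∀ z : ℂ, ‖z‖ ≤ 1 → ε ≤ ‖z - 1‖ → ε ≤ ‖z + 1‖ → ‖iteratedDeriv 3 f z‖ ≤ B) :
    ‖iteratedDeriv N f 0 / (N ! : ℂ)‖ ≤ 6 * exp 2 * (B + 2 * A * 3 ^ k) * log N ^ k / N ^ 2 := by
  set r := 1 - (N : ℝ)⁻¹
  have hN' : (3 : ℝ) ≤ N := by exact_mod_cast hN
  have hr0 : 0 < r := by
    have : (N : ℝ)⁻¹ ≤ 3⁻¹ := inv_anti₀ (by norm_num) hN'
    linarith
  have hball : closedBall (0 : ℂ) r ⊆ ball 0 1 :=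
    closedBall_subset_ball (by simp only [r]; linarith [inv_pos.mpr (by linarith : (0 : ℝ) < N)])
  have hcoeff := norm_iteratedDeriv_div_factorial_le_circleAverage hr0 (hf.mono hball) hN
  have havg := circleAverage_norm_one_sub_inv_le hA hB hN hnear hfar
    (hf.continuousOn.mono (sphere_subset_closedBall.trans hball))
  have hexp := inv_one_sub_inv_pow_le_exp_two (N := N) (m := N - 3) (by omega) (by omega)
  have hLN : 1 ≤ log N ^ k * N := by
    have : 1 ≤ log N := by
      rw [le_log_iff_exp_le (by positivity)]
      linarith [exp_one_lt_d9]
    nlinarith [one_le_pow₀ (n := k) this]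
  rw [norm_div, Complex.norm_natCast]
  calc ‖iteratedDeriv N f 0‖ / (N ! : ℝ)
      ≤ 6 / (N : ℝ) ^ 3 * circleAverage (‖iteratedDeriv 3 f ·‖) 0 r / r ^ (N - 3) := hcoeff
    _ ≤ 6 / (N : ℝ) ^ 3 * (B + 2 * A * (3 * log N) ^ k * N) * exp 2 := by
        rw [div_eq_mul_inv _ (r ^ (N - 3))]
        gcongr
    _ ≤ 6 / (N : ℝ) ^ 3 * (B * (log N ^ k * N) + 2 * A * (3 * log N) ^ k * N) * exp 2 := by
        gcongr
        exact le_mul_of_one_le_right hB hLN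
    _ = 6 * exp 2 * (B + 2 * A * 3 ^ k) * log N ^ k / N ^ 2 := by
        field_simp
        ring

lemma norm_one_sub_div_eq_norm_sub {z ζ : ℂ} (hζ : ‖ζ‖ = 1) : ‖1 - z / ζ‖ = ‖z - ζ‖ := by
  have hζ0 : ζ ≠ 0 := norm_ne_zero_iff.mp (by rw [hζ]; exact one_ne_zero)
  rw [one_sub_div hζ0, norm_div, hζ, div_one, norm_sub_rev]

lemma exists_forall_two_le_of_forall_three_le {u : ℕ → ℝ} {C : ℝ} {k : ℕ}
    (h : ∀ N, 3 ≤ N → u N ≤ C * log N ^ k / N ^ 2) :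
    ∃ C', ∀ N, 2 ≤ N → u N ≤ C' * log N ^ k / N ^ 2 := by
  have hlog2 : 0 < log 2 := log_pos one_lt_two
  refine ⟨max C (4 * u 2 / log 2 ^ k), fun N hN => ?_⟩
  rcases hN.eq_or_lt with rfl | hN
  · calc u 2 = 4 * u 2 / log 2 ^ k * log 2 ^ k / 4 := by field_simp
      _ ≤ max C (4 * u 2 / log 2 ^ k) * log 2 ^ k / 4 := by gcongr; exact le_max_right _ _
      _ = _ := by norm_num
  · refine (h N hN).trans ?_
    have : 0 ≤ log N := log_nonneg (by exact_mod_cast (by omega : 1 ≤ N))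
    gcongr
    exact le_max_left _ _

/-- The two-singularity coefficient-transfer lemma of the paper (Section 7.3.3): if `f` is
holomorphic on `{|z| < R} ∖ {x ∈ ℝ : |x| ≥ 1}` with `R > 1` and satisfies
`|f(z)| ≤ M·|1 − z/ζ|·(1 + |log|1 − z/ζ||)^k` near each `ζ ∈ {−1,1}`, then its Taylor
coefficients at `0` are `O((log N)^k/N²)`. -/
theorem two_singularity_transfer
    (R : ℝ) (hR : 1 < R) (k : ℕ) (f : ℂ → ℂ)
    (hf : DifferentiableOn ℂ f
      ({z : ℂ | ‖z‖ < R} \ {z : ℂ | z.im = 0 ∧ 1 ≤ |z.re|}))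
    (M δ : ℝ) (hM : 0 < M) (hδ0 : 0 < δ) (hδ1 : δ < 1)
    (hbound : ∀ ζ : ℂ, (ζ = 1 ∨ ζ = -1) →
      ∀ z ∈ ({z : ℂ | ‖z‖ < R} \ {z : ℂ | z.im = 0 ∧ 1 ≤ |z.re|}),
        ‖z - ζ‖ < δ →
          ‖f z‖ ≤ M * ‖1 - z / ζ‖ * (1 + |Real.log ‖1 - z / ζ‖|) ^ k) :
    ∃ C : ℝ, ∀ N : ℕ, 2 ≤ N →
      ‖iteratedDeriv N f 0 / (Nat.factorial N : ℂ)‖ ≤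
        C * (Real.log N) ^ k / (N : ℝ) ^ 2 := by
  have hf' : DifferentiableOn ℂ f (slitDisk R) := hf
  have hg : DifferentiableOn ℂ (iteratedDeriv 3 f) (slitDisk R) := by
    rw [iteratedDeriv_eq_iterate]
    exact ((hf'.analyticOnNhd (isOpen_slitDisk R)).iterated_deriv 3).differentiableOn
  have hnear : ∀ ζ : ℂ, (ζ = 1 ∨ ζ = -1) → ∀ z : ℂ, ‖z‖ < 1 → ‖z - ζ‖ < min δ (R - 1) / 2 →
      ‖iteratedDeriv 3 f z‖ ≤ 72 * M * (1 + log 2 - log ‖z - ζ‖) ^ k / ‖z - ζ‖ ^ 2 := by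
    intro ζ hζ
    have hζ1 : ‖ζ‖ = 1 := by rcases hζ with rfl | rfl <;> simp
    refine fun z => norm_iteratedDeriv_three_le_near hf' hM.le hδ1 hζ fun w hw hwζ => ?_
    simpa only [norm_one_sub_div_eq_norm_sub hζ1] using hbound ζ hζ w hw hwζ
  obtain ⟨B, hB, hfar⟩ := exists_norm_le_away_from_one_neg_one hR
    (by positivity : 0 < min δ (R - 1) / 2) hg.continuousOn
  exact exists_forall_two_le_of_forall_three_le fun N hN =>
    norm_iteratedDeriv_div_factorial_le (by positivity) hB hN (hg.mono (ball_subset_slitDisk hR))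
      hnear hfar
end

section
/- For all integers K ≥ 2 and n ≥ 1 there is a constant C > 0 with the following property. Let 2 ≤ k ≤ K, let g ≥ 1 be an integer, and let g_1, …, g_k ≥ 0 and n_1, …, n_k ≥ 1 be integers such that 2g_v − 2 + n_v ≥ 1 for every v, ∑_{v=1}^k n_v = n, and ∑_{v=1}^k (2g_v − 2 + n_v) = 2g − 2 + n. Then ∏_{v=1}^k (6g_v − 5 + 2n_v)!!/(g_v!·24^{g_v}) ≤ C·((6g − 5 + 2n)!!/(g!·24^{g}))·(∏_{v=1}^k (2g_v − 2 + n_v)!)/(2g − 2 + n)!. -/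
/-! Put `d_v = 2g_v - 2 + n_v` and `m_v = d_v + g_v`, so that `6g_v - 5 + 2n_v = 2m_v - 1`.
Since `(2m-1)!!/m! = binom(2m, m)/2^m`, and a product of binomial coefficients is at most the
binomial coefficient of the sums (it is one term of Vandermonde's identity), we get
`∏ (2m_v-1)!!/m_v! ≤ (2S-1)!!/S!` and `∏ m_v!/(d_v! g_v!) ≤ S!/(D! G!)`, where `S, D, G` are the
sums of the `m_v, d_v, g_v`. The Euler characteristic identity gives `D = 2g - 2 + n` and
`G = g + (k - 1)`, hence `S = M + (k - 1)` with `6g - 5 + 2n = 2M - 1`. Shifting `M` and `g` by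
`k - 1 < K` costs at most `(2S)^(k-1)` in the double factorial and gains `(g+1)^(k-1)` in the
factorial, and `2S/(24(g+1))` is bounded in terms of `n` and `K` alone. -/

open Nat Finset

theorem Nat.add_choose_mul_add_choose_le (a b c d : ℕ) :
    (a + b).choose a * (c + d).choose c ≤ (a + c + (b + d)).choose (a + c) := by
  rw [show a + c + (b + d) = a + b + (c + d) by ring, Nat.add_choose_eq (a + b) (c + d)]
  exact single_le_sum (f := fun ij : ℕ × ℕ => (a + b).choose ij.1 * (c + d).choose ij.2)
    (fun _ _ => Nat.zero_le _) (show (a, c) ∈ antidiagonal (a + c) from mem_antidiagonal.2 rfl)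

theorem Nat.doubleFactorial_two_mul_sub_one_mul (m : ℕ) :
    (2 * m - 1)‼ * (2 ^ m * m !) = (2 * m)! := by
  rcases m with _ | m
  · rfl
  · rw [← doubleFactorial_two_mul, show 2 * (m + 1) = 2 * m + 1 + 1 by ring,
      factorial_eq_mul_doubleFactorial, mul_comm]
    rfl

theorem Nat.doubleFactorial_add_two_mul_le (m : ℕ) : ∀ t, (m + 2 * t)‼ ≤ m‼ * (m + 2 * t) ^ t
  | 0 => by simp
  | t + 1 => by
    rw [show m + 2 * (t + 1) = m + 2 * t + 2 by ring, doubleFactorial_add_two, pow_succ]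
    calc (m + 2 * t + 2) * (m + 2 * t)‼
        ≤ (m + 2 * t + 2) * (m‼ * (m + 2 * t + 2) ^ t) := by
          gcongr
          exact (doubleFactorial_add_two_mul_le m t).trans
            (Nat.mul_le_mul_left _ (Nat.pow_le_pow_left (by omega) t))
      _ = _ := by ring

section
variable {ι : Type*}

theorem Finset.prod_add_choose_le (s : Finset ι) (a b : ι → ℕ) :
    ∏ i ∈ s, (a i + b i).choose (a i) ≤
      (∑ i ∈ s, a i + ∑ i ∈ s, b i).choose (∑ i ∈ s, a i) := by
  classical
  induction s using Finset.induction_on with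
  | empty => simp
  | insert j s hj ih =>
    rw [prod_insert hj, sum_insert hj, sum_insert hj]
    exact (Nat.mul_le_mul_left _ ih).trans (Nat.add_choose_mul_add_choose_le _ _ _ _)

theorem Finset.prod_factorial_add_div_le (s : Finset ι) (a b : ι → ℕ) :
    ∏ i ∈ s, ((a i + b i)! / ((a i)! * (b i)!) : ℝ) ≤
      (∑ i ∈ s, a i + ∑ i ∈ s, b i)! / ((∑ i ∈ s, a i)! * (∑ i ∈ s, b i)!) := by
  simp_rw [← Nat.cast_add_choose]
  exact_mod_cast prod_add_choose_le s a b

theorem Finset.prod_doubleFactorial_div_factorial_le (s : Finset ι) (f : ι → ℕ) :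
    ∏ i ∈ s, ((2 * f i - 1)‼ / (f i)! : ℝ) ≤ (2 * ∑ i ∈ s, f i - 1)‼ / (∑ i ∈ s, f i)! := by
  have central : ∀ m : ℕ, ((2 * m - 1)‼ / m ! : ℝ) = (m + m)! / (m ! * m !) / 2 ^ m := by
    intro m
    rw [← two_mul, ← doubleFactorial_two_mul_sub_one_mul]
    push_cast
    field_simp
  simp_rw [central]
  rw [prod_div_distrib, prod_pow_eq_pow_sum]
  gcongr
  exact prod_factorial_add_div_le s f f

theorem Finset.prod_doubleFactorial_div_factorial_le_mul (s : Finset ι) (d h : ι → ℕ) :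
    ∏ i ∈ s, ((2 * (d i + h i) - 1)‼ / (h i)! : ℝ) ≤
      (2 * (∑ i ∈ s, d i + ∑ i ∈ s, h i) - 1)‼ / (∑ i ∈ s, h i)! *
        ((∏ i ∈ s, ((d i)! : ℝ)) / (∑ i ∈ s, d i)!) := by
  set D := ∑ i ∈ s, d i
  set H := ∑ i ∈ s, h i
  have hsum : ∑ i ∈ s, (d i + h i) = D + H := sum_add_distrib
  calc ∏ i ∈ s, ((2 * (d i + h i) - 1)‼ / (h i)! : ℝ)
      = (∏ i ∈ s, ((2 * (d i + h i) - 1)‼ / (d i + h i)! : ℝ)) *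
          (∏ i ∈ s, ((d i + h i)! / ((d i)! * (h i)!) : ℝ)) * ∏ i ∈ s, ((d i)! : ℝ) := by
        rw [← prod_mul_distrib, ← prod_mul_distrib]
        refine prod_congr rfl fun i _ => ?_
        field_simp
    _ ≤ (2 * (D + H) - 1)‼ / (D + H)! * ((D + H)! / (D ! * H !)) * ∏ i ∈ s, ((d i)! : ℝ) := by
        gcongr
        · exact hsum ▸ prod_doubleFactorial_div_factorial_le s (fun i => d i + h i)
        · exact prod_factorial_add_div_le s d h
    _ = _ := by
        field_simp
end

theorem doubleFactorial_div_factorial_shift_le (M g t c : ℕ) (hM : 1 ≤ M)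
    (hc : 2 * (M + t) ≤ 24 * c * (g + 1)) :
    ((2 * (M + t) - 1)‼ : ℝ) / ((g + t)! * 24 ^ (g + t)) ≤
      c ^ t * ((2 * M - 1)‼ / (g ! * 24 ^ g)) := by
  have hdf : (2 * (M + t) - 1)‼ ≤ (2 * M - 1)‼ * (24 * c * (g + 1)) ^ t := by
    have h := doubleFactorial_add_two_mul_le (2 * M - 1) t
    rw [show 2 * M - 1 + 2 * t = 2 * (M + t) - 1 by omega] at h
    exact h.trans (by gcongr; omega)
  have hfac : g ! * (g + 1) ^ t ≤ (g + t)! := factorial_mul_pow_le_factorial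
  rw [div_le_iff₀ (by positivity)]
  calc ((2 * (M + t) - 1)‼ : ℝ) ≤ (2 * M - 1)‼ * (24 * c * (g + 1)) ^ t := by exact_mod_cast hdf
    _ = c ^ t * ((2 * M - 1)‼ / (g ! * 24 ^ g)) * (g ! * (g + 1) ^ t * 24 ^ (g + t)) := by
        rw [mul_pow, mul_pow, pow_add]
        field_simp
    _ ≤ c ^ t * ((2 * M - 1)‼ / (g ! * 24 ^ g)) * ((g + t)! * 24 ^ (g + t)) := by
        gcongr; exact_mod_cast hfac

theorem sum_add_one_eq_of_sum_euler_eq {k g n : ℕ} (gs ns : Fin k → ℕ) (hn : ∑ v, ns v = n)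
    (hE : ∑ v, (2 * (gs v : ℤ) - 2 + (ns v : ℤ)) = 2 * (g : ℤ) - 2 + (n : ℤ)) :
    ∑ v, gs v + 1 = g + k := by
  have hsum : ∑ v, (2 * (gs v : ℤ) - 2 + ns v) = 2 * ((∑ v, gs v : ℕ) : ℤ) - 2 * k + n := by
    rw [sum_add_distrib, sum_sub_distrib, ← mul_sum, ← hn]
    simp only [sum_const, Finset.card_univ, Fintype.card_fin, nsmul_eq_mul]
    push_cast
    ring
  omega

theorem sum_two_mul_add_sub_two_eq_of_sum_euler_eq {k g n : ℕ} (gs ns : Fin k → ℕ)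
    (hv : ∀ v, 2 ≤ 2 * gs v + ns v)
    (hE : ∑ v, (2 * (gs v : ℤ) - 2 + (ns v : ℤ)) = 2 * (g : ℤ) - 2 + (n : ℤ)) :
    ∑ v, (2 * gs v + ns v - 2) = 2 * g + n - 2 := by
  have hcast : ((∑ v, (2 * gs v + ns v - 2) : ℕ) : ℤ) = 2 * g - 2 + n := by
    rw [← hE, Nat.cast_sum]
    exact sum_congr rfl fun v _ => by have := hv v; omega
  omega

/-- The paper's Lemma lem:bound product: for all `K ≥ 2` and `n ≥ 1` there is a constant
`C > 0` such that for any `2 ≤ k ≤ K`, `g ≥ 1`, and genera/boundary data `(g_v, n_v)`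
with `2g_v − 2 + n_v ≥ 1`, `∑ n_v = n`, `∑ (2g_v − 2 + n_v) = 2g − 2 + n`, one has
`∏_v (6g_v−5+2n_v)!!/(g_v!·24^{g_v}) ≤ C·((6g−5+2n)!!/(g!·24^g))·(∏_v (2g_v−2+n_v)!)/(2g−2+n)!`. -/
theorem double_factorial_product_bound :
    ∀ K n : ℕ, 2 ≤ K → 1 ≤ n →
      ∃ C : ℝ, 0 < C ∧
        ∀ k : ℕ, 2 ≤ k → k ≤ K →
          ∀ g : ℕ, 1 ≤ g →
            ∀ gs ns : Fin k → ℕ,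
              (∀ v, 1 ≤ ns v) →
              (∀ v, (1 : ℤ) ≤ 2 * (gs v : ℤ) - 2 + (ns v : ℤ)) →
              (∑ v, ns v = n) →
              (∑ v, (2 * (gs v : ℤ) - 2 + (ns v : ℤ)) = 2 * (g : ℤ) - 2 + (n : ℤ)) →
              ∏ v, ((Nat.doubleFactorial (6 * gs v + 2 * ns v - 5) : ℝ) /
                  ((Nat.factorial (gs v) : ℝ) * 24 ^ (gs v))) ≤
              C * ((Nat.doubleFactorial (6 * g + 2 * n - 5) : ℝ) /
                  ((Nat.factorial g : ℝ) * 24 ^ g)) *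
                (∏ v, (Nat.factorial (2 * gs v + ns v - 2) : ℝ)) /
                (Nat.factorial (2 * g + n - 2) : ℝ) := by
  intro K n _ hn
  refine ⟨((n + K : ℕ) : ℝ) ^ K, by positivity, ?_⟩
  intro k hk hkK g hg gs ns _ hv hsum_n hE
  set d : Fin k → ℕ := fun v => 2 * gs v + ns v - 2
  have hvd : ∀ v, 6 * gs v + 2 * ns v - 5 = 2 * (d v + gs v) - 1 := fun v => by
    have := hv v; simp only [d]; omega
  have hD : ∑ v, d v = 2 * g + n - 2 :=
    sum_two_mul_add_sub_two_eq_of_sum_euler_eq gs ns (fun v => by have := hv v; omega) hE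
  have hG : ∑ v, gs v = g + (k - 1) := by
    have := sum_add_one_eq_of_sum_euler_eq gs ns hsum_n hE
    omega
  have hM : 6 * g + 2 * n - 5 = 2 * (2 * g + n - 2 + g) - 1 := by omega
  have hc : 2 * (2 * g + n - 2 + g + (k - 1)) ≤ 24 * (n + K) * (g + 1) := by
    have : 2 * g + n - 2 + g + (k - 1) ≤ 3 * g + n + K := by omega
    nlinarith
  calc ∏ v, ((6 * gs v + 2 * ns v - 5)‼ : ℝ) / ((gs v)! * 24 ^ gs v)
      = (∏ v, ((2 * (d v + gs v) - 1)‼ / (gs v)! : ℝ)) / 24 ^ (g + (k - 1)) := by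
        simp_rw [hvd, ← div_div]
        rw [prod_div_distrib, prod_pow_eq_pow_sum, hG]
    _ ≤ (2 * (2 * g + n - 2 + (g + (k - 1))) - 1)‼ / (g + (k - 1))! *
          ((∏ v, ((d v)! : ℝ)) / (2 * g + n - 2)!) / 24 ^ (g + (k - 1)) := by
        gcongr
        simpa only [hD, hG] using prod_doubleFactorial_div_factorial_le_mul univ d gs
    _ = (2 * (2 * g + n - 2 + g + (k - 1)) - 1)‼ / ((g + (k - 1))! * 24 ^ (g + (k - 1))) *
          ((∏ v, ((d v)! : ℝ)) / (2 * g + n - 2)!) := by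
        rw [← add_assoc]; ring
    _ ≤ ((n + K : ℕ) : ℝ) ^ (k - 1) * ((2 * (2 * g + n - 2 + g) - 1)‼ / (g ! * 24 ^ g)) *
          ((∏ v, ((d v)! : ℝ)) / (2 * g + n - 2)!) := by
        gcongr
        exact doubleFactorial_div_factorial_shift_le _ _ _ _ (by omega) hc
    _ ≤ _ := by
        rw [hM, mul_div_assoc]
        gcongr
        · exact_mod_cast (by omega : 1 ≤ n + K)
        · omega
end

section
/- For all integers n and k with 2 ≤ k ≤ n, ∑ (n_1!·n_2!⋯n_k!)/n! ≤ 4/n, where the sum ranges over all k-tuples (n_1, …, n_k) of positive integers with n_1 + ⋯ + n_k = n. -/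
/-!
Multiply the sum by `n!` and call the result `T k n`, so that `T k n` sums `∏ nᵢ!` over the
compositions of `n` into `k` positive parts; the claim is `T k n ≤ 4 (n - 1)!`. Splitting off the
first part gives `T (k + 1) n = ∑_{a + b = n, a ≥ 1} a! T k b`. For `k = 2` this is
`∑_{a + b = n, a, b ≥ 1} a! b! ≤ 4 (n - 1)!`: the two end terms give `2 (n - 1)!` and each of the
`n - 3` middle terms is at most `2 (n - 2)!`. For the induction step, `T k b` vanishes unless
`b ≥ 2`, and otherwise `a! T k b ≤ 4 a! (b - 1)!`, so `T (k + 1) n` is at most `4` times the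
`k = 2` sum for `n - 1`, which is at most `(n - 1)!`.
-/

open Nat Finset

theorem Finset.Nat.sum_antidiagonalTuple_succ {M : Type*} [AddCommMonoid M] (k n : ℕ)
    (g : (Fin (k + 1) → ℕ) → M) :
    ∑ f ∈ Nat.antidiagonalTuple (k + 1) n, g f =
      ∑ p ∈ antidiagonal n, ∑ t ∈ Nat.antidiagonalTuple k p.2, g (Fin.cons p.1 t) := by
  rw [sum_sigma']
  symm
  refine sum_nbij' (fun x : Σ _ : ℕ × ℕ, Fin k → ℕ => (Fin.cons x.1.1 x.2 : Fin (k + 1) → ℕ))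
    (fun f : Fin (k + 1) → ℕ => ⟨(f 0, ∑ i, Fin.tail f i), Fin.tail f⟩) ?_ ?_ ?_ ?_
    fun _ _ => rfl
  · rintro ⟨⟨a, b⟩, t⟩ h
    simp_all [Nat.mem_antidiagonalTuple, Fin.sum_univ_succ]
  · intro f h
    simp_all [Nat.mem_antidiagonalTuple, Fin.sum_univ_succ, Fin.tail]
  · rintro ⟨⟨a, b⟩, t⟩ h
    simp_all [Nat.mem_antidiagonalTuple]
  · intro f _
    exact Fin.cons_self_tail f

theorem factorial_add_two_mul_factorial_add_two_le (a b : ℕ) :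
    (a + 2)! * (b + 2)! ≤ 2 * (a + b + 2)! := by
  induction b with
  | zero => simp [mul_comm]
  | succ b ih =>
    calc (a + 2)! * (b + 1 + 2)! = (b + 3) * ((a + 2)! * (b + 2)!) := by
          rw [Nat.factorial_succ (b + 2)]; ring
      _ ≤ (a + b + 3) * (2 * (a + b + 2)!) := Nat.mul_le_mul (by omega) ih
      _ = 2 * (a + b + 2 + 1)! := by rw [Nat.factorial_succ (a + b + 2)]; ring

theorem sum_antidiagonal_factorial_succ_mul_factorial_succ_le (i : ℕ) :
    ∑ p ∈ antidiagonal i, (p.1 + 1)! * (p.2 + 1)! ≤ 4 * (i + 1)! := by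
  obtain _ | _ | l := i
  · decide
  · decide
  rw [Nat.sum_antidiagonal_succ, Nat.sum_antidiagonal_succ']
  have hmiddle : ∑ p ∈ antidiagonal l, (p.1 + 2)! * (p.2 + 2)! ≤ (l + 1) * (2 * (l + 2)!) :=
    calc ∑ p ∈ antidiagonal l, (p.1 + 2)! * (p.2 + 2)!
        ≤ ∑ _p ∈ antidiagonal l, 2 * (l + 2)! := sum_le_sum fun p hp => by
          rw [← mem_antidiagonal.1 hp]; exact factorial_add_two_mul_factorial_add_two_le _ _
      _ = (l + 1) * (2 * (l + 2)!) := by rw [sum_const, Nat.card_antidiagonal, smul_eq_mul]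
  have hfac : (l + 3)! = (l + 3) * (l + 2)! := Nat.factorial_succ _
  simp only [zero_add, factorial_one, one_mul, mul_one] at hmiddle ⊢
  nlinarith

theorem sum_antidiagonal_factorial_succ_mul_factorial_succ_le_factorial (i : ℕ) :
    ∑ p ∈ antidiagonal i, (p.1 + 1)! * (p.2 + 1)! ≤ (i + 2)! := by
  obtain _ | _ | i := i
  · decide
  · decide
  calc _ ≤ 4 * (i + 2 + 1)! := sum_antidiagonal_factorial_succ_mul_factorial_succ_le _
    _ ≤ (i + 4) * (i + 3)! := Nat.mul_le_mul_right _ (by omega)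
    _ = (i + 2 + 2)! := (Nat.factorial_succ _).symm

def compositionFactorialSum (k n : ℕ) : ℕ :=
  ∑ f ∈ (Nat.antidiagonalTuple k n).filter (fun f => ∀ i, 1 ≤ f i), ∏ i, (f i)!

theorem compositionFactorialSum_eq_zero_of_lt {k n : ℕ} (h : n < k) :
    compositionFactorialSum k n = 0 := by
  refine sum_eq_zero fun f hf => absurd h (not_lt.2 ?_)
  simp only [mem_filter, Nat.mem_antidiagonalTuple] at hf
  calc k = ∑ _i : Fin k, 1 := by simp
    _ ≤ ∑ i, f i := sum_le_sum fun i _ => hf.2 i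
    _ = n := hf.1

theorem compositionFactorialSum_one_succ (m : ℕ) :
    compositionFactorialSum 1 (m + 1) = (m + 1)! := by
  simp [compositionFactorialSum, Nat.antidiagonalTuple_one, filter_singleton]

theorem compositionFactorialSum_succ_succ (k m : ℕ) :
    compositionFactorialSum (k + 1) (m + 1) =
      ∑ p ∈ antidiagonal m, (p.1 + 1)! * compositionFactorialSum k p.2 := by
  rw [compositionFactorialSum, sum_filter, Nat.sum_antidiagonalTuple_succ,
    Nat.sum_antidiagonal_succ]
  simp [Fin.forall_fin_succ, Fin.prod_univ_succ, compositionFactorialSum, sum_filter, mul_sum]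

theorem compositionFactorialSum_two (j : ℕ) :
    compositionFactorialSum 2 (j + 2) = ∑ p ∈ antidiagonal j, (p.1 + 1)! * (p.2 + 1)! := by
  rw [compositionFactorialSum_succ_succ, Nat.sum_antidiagonal_succ',
    compositionFactorialSum_eq_zero_of_lt zero_lt_one, mul_zero, zero_add]
  simp only [compositionFactorialSum_one_succ]

theorem compositionFactorialSum_succ_add_three {k : ℕ} (hk : 2 ≤ k) (i : ℕ) :
    compositionFactorialSum (k + 1) (i + 3) =
      ∑ p ∈ antidiagonal i, (p.1 + 1)! * compositionFactorialSum k (p.2 + 2) := by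
  rw [compositionFactorialSum_succ_succ, Nat.sum_antidiagonal_succ', Nat.sum_antidiagonal_succ',
    compositionFactorialSum_eq_zero_of_lt (by omega : 0 < k),
    compositionFactorialSum_eq_zero_of_lt (by omega : 1 < k)]
  simp

theorem compositionFactorialSum_le {k : ℕ} (hk : 2 ≤ k) (n : ℕ) :
    compositionFactorialSum k n ≤ 4 * (n - 1)! := by
  induction k, hk using Nat.le_induction generalizing n with
  | base =>
    obtain _ | _ | j := n
    · simp [compositionFactorialSum_eq_zero_of_lt two_pos]
    · simp [compositionFactorialSum_eq_zero_of_lt one_lt_two]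
    rw [compositionFactorialSum_two]
    exact sum_antidiagonal_factorial_succ_mul_factorial_succ_le j
  | succ k hk ih =>
    rcases lt_or_ge n 3 with hn | hn
    · simp [compositionFactorialSum_eq_zero_of_lt (by omega : n < k + 1)]
    obtain ⟨i, rfl⟩ := Nat.exists_eq_add_of_le' hn
    calc compositionFactorialSum (k + 1) (i + 3)
        = ∑ p ∈ antidiagonal i, (p.1 + 1)! * compositionFactorialSum k (p.2 + 2) :=
          compositionFactorialSum_succ_add_three hk i
      _ ≤ ∑ p ∈ antidiagonal i, (p.1 + 1)! * (4 * (p.2 + 1)!) :=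
          sum_le_sum fun p _ => Nat.mul_le_mul_left _ (ih _)
      _ = 4 * ∑ p ∈ antidiagonal i, (p.1 + 1)! * (p.2 + 1)! := by
          rw [mul_sum]; exact sum_congr rfl fun _ _ => by ring
      _ ≤ 4 * (i + 3 - 1)! :=
          Nat.mul_le_mul_left _ (sum_antidiagonal_factorial_succ_mul_factorial_succ_le_factorial i)

/-- The composition-sum bound (Barazer–Giacchetto–Liu, Lemma 4.3): for `2 ≤ k ≤ n`,
`∑ (n₁!⋯n_k!)/n! ≤ 4/n`, the sum ranging over all `k`-tuples of positive integers with
`n₁ + ⋯ + n_k = n`. -/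
theorem composition_factorial_sum_bound :
    ∀ n k : ℕ, 2 ≤ k → k ≤ n →
      ∑ f ∈ (Finset.Nat.antidiagonalTuple k n).filter (fun f => ∀ i, 1 ≤ f i),
          (∏ i, (Nat.factorial (f i) : ℝ)) / (Nat.factorial n : ℝ)
        ≤ 4 / (n : ℝ) := by
  intro n k hk hkn
  obtain ⟨m, rfl⟩ : ∃ m, n = m + 1 := ⟨n - 1, by omega⟩
  have hsum : ∑ f ∈ (Finset.Nat.antidiagonalTuple k (m + 1)).filter (fun f => ∀ i, 1 ≤ f i),
      (∏ i, ((f i)! : ℝ)) / ((m + 1)! : ℝ) = compositionFactorialSum k (m + 1) / (m + 1)! := by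
    simp [compositionFactorialSum, sum_div]
  have hbound : (compositionFactorialSum k (m + 1) : ℝ) ≤ 4 * m ! := by
    exact_mod_cast compositionFactorialSum_le hk (m + 1)
  rw [hsum, div_le_div_iff₀ (by positivity) (by positivity), Nat.factorial_succ]
  push_cast
  nlinarith
end
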